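/- arXiv:1101.3671 — 6 statements merged into one kernel-verified Lean document; each statement's English description precedes it below -/
import Mathlib

section
/- Let X be a real Banach space, x₀ ∈ X, R > 0, and let A be an operator defined on the closed ball B[x₀,R] = {x ∈ X : ‖x − x₀‖ ≤ R} satisfying the variable Lipschitz condition with a continuous nonnegative function k on [0,R]. Then for every x ∈ X and h ∈ X and reals r ≥ 0, δ ≥ 0 with ‖x − x₀‖ ≤ r, ‖h‖ ≤ δ and r + δ ≤ R, one has ‖A(x + h) − A x‖ ≤ ∫_r^{r+δ} k(t) dt. -/
open Set intervalIntegral Filter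

/-- The basic lemma: under the variable Lipschitz condition,
`‖A (x + h) - A x‖ ≤ ∫_r^{r+δ} k(t) dt`. -/
theorem majorization_lemma
    {X : Type*} [NormedAddCommGroup X] [NormedSpace ℝ X] [CompleteSpace X]
    (x₀ : X) (R : ℝ) (hR : 0 < R) (A : X → X) (k : ℝ → ℝ)
    (hk_cont : ContinuousOn k (Set.Icc 0 R))
    (hk_nonneg : ∀ t ∈ Set.Icc (0 : ℝ) R, 0 ≤ k t)
    (hLip : ∀ x₁ x₂ : X, ∀ r : ℝ, ‖x₁ - x₀‖ ≤ r → ‖x₂ - x₀‖ ≤ r →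
      0 < r → r ≤ R → ‖A x₁ - A x₂‖ ≤ k r * ‖x₁ - x₂‖)
    (x h : X) (r δ : ℝ) (hr : 0 ≤ r) (hδ : 0 ≤ δ)
    (hxr : ‖x - x₀‖ ≤ r) (hhδ : ‖h‖ ≤ δ) (hrδ : r + δ ≤ R) :
    ‖A (x + h) - A x‖ ≤ ∫ t in r..(r + δ), k t := by
  rcases eq_or_lt_of_le hδ with hδ0 | hδpos
  · -- δ = 0, so h = 0
    have hh : h = 0 := norm_le_zero_iff.mp (by rw [← hδ0] at hhδ; exact hhδ)
    simp [hh, ← hδ0]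
  -- main case: δ > 0
  -- the clamped version of k, continuous on all of ℝ
  set K : ℝ → ℝ := fun t => k (min (max t 0) R) with hK
  have hclamp : ∀ t : ℝ, min (max t 0) R ∈ Icc (0 : ℝ) R := fun t =>
    ⟨le_min (le_max_right _ _) hR.le, min_le_right _ _⟩
  have hKcont : Continuous K :=
    hk_cont.comp_continuous ((continuous_id.max continuous_const).min continuous_const) hclamp
  have hKnonneg : ∀ t, 0 ≤ K t := fun t => hk_nonneg _ (hclamp t)
  have hKeq : ∀ t ∈ Icc (0 : ℝ) R, K t = k t := by
    intro t ht
    simp only [hK]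
    rw [max_eq_left ht.1, min_eq_left ht.2]
  -- the curve
  set g : ℝ → X := fun s => A (x + s • h) with hg
  have hmem : ∀ s ∈ Icc (0 : ℝ) 1, ‖(x + s • h) - x₀‖ ≤ r + s * δ := by
    intro s hs
    calc ‖(x + s • h) - x₀‖ = ‖(x - x₀) + s • h‖ := by congr 1; abel
      _ ≤ ‖x - x₀‖ + ‖s • h‖ := norm_add_le _ _
      _ ≤ r + s * δ := by
          rw [norm_smul, Real.norm_eq_abs, abs_of_nonneg hs.1]
          exact add_le_add hxr (mul_le_mul_of_nonneg_left hhδ hs.1)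
  have hrsR : ∀ s ∈ Icc (0 : ℝ) 1, r + s * δ ≤ R := by
    intro s hs
    have : s * δ ≤ δ := by nlinarith [hs.2, hδ]
    linarith
  -- the key Lipschitz estimate on g
  have hgLip : ∀ s ∈ Icc (0 : ℝ) 1, ∀ t ∈ Icc (0 : ℝ) 1, s ≤ t → 0 < r + t * δ →
      ‖g t - g s‖ ≤ K (r + t * δ) * ((t - s) * δ) := by
    intro s hs t ht hst hpos
    have h1 : ‖(x + t • h) - x₀‖ ≤ r + t * δ := hmem t ht
    have h2 : ‖(x + s • h) - x₀‖ ≤ r + t * δ :=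
      (hmem s hs).trans (by nlinarith)
    have h3 := hLip (x + t • h) (x + s • h) (r + t * δ) h1 h2 hpos (hrsR t ht)
    have h4 : (x + t • h) - (x + s • h) = (t - s) • h := by
      rw [sub_smul]; abel
    rw [h4, norm_smul, Real.norm_eq_abs, abs_of_nonneg (by linarith)] at h3
    have hKk : K (r + t * δ) = k (r + t * δ) :=
      hKeq _ ⟨by nlinarith, hrsR t ht⟩
    rw [hKk]
    calc ‖g t - g s‖ ≤ k (r + t * δ) * ((t - s) * ‖h‖) := h3
      _ ≤ k (r + t * δ) * ((t - s) * δ) := by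
          have hknn := hk_nonneg (r + t * δ) ⟨by nlinarith, hrsR t ht⟩
          have hts : (0:ℝ) ≤ t - s := by linarith
          gcongr
  -- f is the norm function
  set f : ℝ → ℝ := fun s => ‖g s - g 0‖ with hf
  -- continuity of f on [0,1]
  have hgcont : ContinuousOn g (Icc 0 1) := by
    have : LipschitzOnWith (k R * δ).toNNReal g (Icc 0 1) := by
      apply LipschitzOnWith.of_dist_le_mul
      intro a ha b hb
      rcases le_total b a with hba | hab
      · have h1 : ‖(x + a • h) - x₀‖ ≤ R := (hmem a ha).trans (hrsR a ha)
        have h2 : ‖(x + b • h) - x₀‖ ≤ R := (hmem b hb).trans (hrsR b hb)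
        have h3 := hLip (x + a • h) (x + b • h) R h1 h2 hR le_rfl
        have h4 : (x + a • h) - (x + b • h) = (a - b) • h := by
          rw [sub_smul]; abel
        rw [h4, norm_smul, Real.norm_eq_abs] at h3
        have hkR : 0 ≤ k R := hk_nonneg R ⟨hR.le, le_rfl⟩
        rw [dist_eq_norm, Real.coe_toNNReal _ (by positivity), Real.dist_eq]
        calc ‖g a - g b‖ ≤ k R * (|a - b| * ‖h‖) := h3
          _ ≤ k R * (|a - b| * δ) := by gcongr
          _ = k R * δ * |a - b| := by ring
      · have h1 : ‖(x + a • h) - x₀‖ ≤ R := (hmem a ha).trans (hrsR a ha)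
        have h2 : ‖(x + b • h) - x₀‖ ≤ R := (hmem b hb).trans (hrsR b hb)
        have h3 := hLip (x + b • h) (x + a • h) R h2 h1 hR le_rfl
        have h4 : (x + b • h) - (x + a • h) = (b - a) • h := by
          rw [sub_smul]; abel
        rw [h4, norm_smul, Real.norm_eq_abs] at h3
        have hkR : 0 ≤ k R := hk_nonneg R ⟨hR.le, le_rfl⟩
        rw [dist_eq_norm, ← norm_neg, neg_sub, Real.coe_toNNReal _ (by positivity),
          Real.dist_eq, ← abs_neg, neg_sub]
        calc ‖g b - g a‖ ≤ k R * (|b - a| * ‖h‖) := h3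
          _ ≤ k R * (|b - a| * δ) := by gcongr
          _ = k R * δ * |b - a| := by ring
    exact this.continuousOn
  have hfcont : ContinuousOn f (Icc 0 1) :=
    (hgcont.sub continuousOn_const).norm
  -- B and its derivative
  set B : ℝ → ℝ := fun s => ∫ t in r..(r + s * δ), K t with hB
  have hB' : ∀ s : ℝ, HasDerivAt B (K (r + s * δ) * δ) s := by
    intro s
    have h1 : HasDerivAt (fun u => ∫ t in r..u, K t) (K (r + s * δ)) (r + s * δ) :=
      (hKcont.integral_hasStrictDerivAt r (r + s * δ)).hasDerivAt
    have h2 : HasDerivAt (fun s : ℝ => r + s * δ) δ s := by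
      simpa using ((hasDerivAt_id s).mul_const δ).const_add r
    exact h1.comp s h2
  -- bound on the liminf of the right slope
  have bound : ∀ s ∈ Ico (0 : ℝ) 1, ∀ ρ, K (r + s * δ) * δ < ρ →
      ∃ᶠ z in nhdsWithin s (Ioi s), slope f s z < ρ := by
    intro s hs ρ hρ
    apply Eventually.frequently
    have hcont : ContinuousAt (fun z => K (r + z * δ) * δ) s :=
      ((hKcont.comp (continuous_const.add (continuous_id.mul continuous_const))).mul continuous_const).continuousAt
    have hev1 : ∀ᶠ z in nhdsWithin s (Ioi s), K (r + z * δ) * δ < ρ :=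
      eventually_nhdsWithin_of_eventually_nhds (hcont.eventually_lt continuousAt_const hρ)
    have hev2 : ∀ᶠ z in nhdsWithin s (Ioi s), z ∈ Ioc s 1 :=
      Ioc_mem_nhdsGT_of_mem ⟨le_rfl, hs.2⟩
    filter_upwards [hev1, hev2] with z h1 h2
    have hz01 : z ∈ Icc (0 : ℝ) 1 := ⟨hs.1.trans h2.1.le, h2.2⟩
    have hzpos : 0 < r + z * δ := by
      rcases lt_or_ge 0 r with hr' | hr'
      · nlinarith [hz01.1]
      · have : r = 0 := le_antisymm hr' hr
        have : 0 < z := lt_of_le_of_lt hs.1 h2.1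
        nlinarith
    have hslope : slope f s z ≤ K (r + z * δ) * δ := by
      rw [slope_def_field]
      have hnum : f z - f s ≤ ‖g z - g s‖ := by
        have := norm_sub_norm_le (g z - g 0) (g s - g 0)
        simpa [hf] using this.trans (le_of_eq (by congr 1; abel))
      have hlip := hgLip s (Ico_subset_Icc_self hs) z hz01 h2.1.le hzpos
      have hzs : 0 < z - s := by linarith [h2.1]
      rw [div_le_iff₀ hzs]
      calc f z - f s ≤ ‖g z - g s‖ := hnum
        _ ≤ K (r + z * δ) * ((z - s) * δ) := hlip
        _ = K (r + z * δ) * δ * (z - s) := by ring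
    exact lt_of_le_of_lt hslope h1
  -- apply the fencing theorem
  have key : f 1 ≤ B 1 := by
    refine image_le_of_liminf_slope_right_le_deriv_boundary hfcont ?_
      (fun s _ => (hB' s).continuousAt.continuousWithinAt)
      (fun s _ => (hB' s).hasDerivWithinAt) bound ⟨zero_le_one, le_rfl⟩
    simp [hf, hB]
  -- translate back
  have hf1 : f 1 = ‖A (x + h) - A x‖ := by simp [hf, hg]
  have hB1 : B 1 = ∫ t in r..(r + δ), k t := by
    simp only [hB, one_mul]
    apply intervalIntegral.integral_congr
    intro t ht
    rw [uIcc_of_le (by linarith)] at ht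
    exact hKeq t ⟨by linarith [ht.1], by linarith [ht.2]⟩
  rw [← hf1, ← hB1]
  exact key
end

section
/- Let X be a real Banach space, x₀ ∈ X, R > 0, and let A satisfy the variable Lipschitz condition on B[x₀,R] with a continuous nonnegative function k on [0,R]. Set a = ‖A x₀ − x₀‖ and a₊(r) = a + ∫₀^r k(t) dt, and assume a₊ has a fixed point in [0,R]. Define r₀ = 0, r_{n+1} = a₊(r_n), and the successive approximations x₀ (the center of the ball), x_{n+1} = A x_n. Then for every n all x_n are well defined, ‖x_n − x₀‖ ≤ r_n ≤ R (so x_n ∈ B[x₀,R]), and ‖x_{n+1} − x_n‖ ≤ r_{n+1} − r_n. -/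
/-!
As `k ≥ 0` on `[0, R]`, `a₊` is increasing there, so the iterates `r n` increase and stay below the
fixed point `ρ ≤ R`. The key estimate: if `‖y₁ - x₀‖ ≤ s₀` and `‖y₂ - y₁‖ ≤ s₁ - s₀`, then
`‖A y₂ - A y₁‖ ≤ ∫_{s₀}^{s₁} k = a₊ s₁ - a₊ s₀`. Join `y₁` (at time `s₀`) to `y₂` (at time `s₁`)
by a `1`-Lipschitz path `γ`; then `γ t ∈ B[x₀, t]`, so the Lipschitz condition at radius `t'`
gives `‖A (γ t') - A (γ t)‖ ≤ k t' * (t' - t)` for `t < t'`, and a comparison argument for right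
Dini derivatives integrates this infinitesimal bound. Induction on `n` with `y₁ = x n`,
`y₂ = x (n + 1)`, `s₀ = r n`, `s₁ = r (n + 1)` finishes the proof.
-/

open Set Filter Topology MeasureTheory intervalIntegral

theorem lipschitzOnWith_of_norm_sub_le_mul {E : Type*} [NormedAddCommGroup E] {g : ℝ → E}
    {k : ℝ → ℝ} {a b C : ℝ} (hC : ∀ t ∈ Icc a b, k t ≤ C)
    (hg : ∀ t t', a ≤ t → t < t' → t' ≤ b → ‖g t' - g t‖ ≤ k t' * (t' - t)) :
    LipschitzOnWith (Real.toNNReal C) g (Icc a b) := by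
  refine LipschitzOnWith.of_dist_le_mul fun t ht t' ht' => ?_
  wlog htt' : t' ≤ t generalizing t t'
  · rw [dist_comm, dist_comm t]
    exact this t' ht' t ht (le_of_not_ge htt')
  rcases htt'.eq_or_lt with rfl | htt'
  · simp
  rw [dist_eq_norm, Real.dist_eq, abs_of_pos (sub_pos.2 htt')]
  calc ‖g t - g t'‖ ≤ k t * (t - t') := hg t' t ht'.1 htt' ht.2
    _ ≤ C * (t - t') := by gcongr; exact hC t ht
    _ ≤ Real.toNNReal C * (t - t') := by gcongr; exact Real.le_coe_toNNReal C

theorem norm_sub_le_integral_of_norm_sub_le_mul {E : Type*} [NormedAddCommGroup E]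
    {g : ℝ → E} {k : ℝ → ℝ} {a b : ℝ} (hab : a ≤ b) (hk : ContinuousOn k (Icc a b))
    (hg : ∀ t t', a ≤ t → t < t' → t' ≤ b → ‖g t' - g t‖ ≤ k t' * (t' - t)) :
    ‖g b - g a‖ ≤ ∫ t in a..b, k t := by
  obtain ⟨C, hC⟩ := isCompact_Icc.exists_bound_of_continuousOn hk
  have hg_lip := lipschitzOnWith_of_norm_sub_le_mul (fun t ht => (le_abs_self _).trans (hC t ht)) hg
  have hk_int : IntervalIntegrable k volume a b :=
    (hk.mono (uIcc_of_le hab).subset).intervalIntegrable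
  have hprim_cont : ContinuousOn (fun u => ∫ t in a..u, k t) (Icc a b) := by
    simpa [uIcc_of_le hab] using continuousOn_primitive_interval' hk_int left_mem_uIcc
  have hk_right : ∀ u ∈ Ico a b, ContinuousWithinAt k (Ioi u) u := fun u hu =>
    (hk u (Ico_subset_Icc_self hu)).mono_of_mem_nhdsWithin (Icc_mem_nhdsGT_of_mem hu)
  have hprim_deriv : ∀ u ∈ Ico a b,
      HasDerivWithinAt (fun u => ∫ t in a..u, k t) (k u) (Ici u) u := fun u hu =>
    integral_hasDerivWithinAt_right
      (hk_int.mono_set (by simpa [uIcc_of_le hab, hu.1] using Icc_subset_Icc_right hu.2.le))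
      ⟨Icc a b, Icc_mem_nhdsGT_of_mem hu, hk.aestronglyMeasurable measurableSet_Icc⟩
      (hk_right u hu)
  have hslope : ∀ u ∈ Ico a b, ∀ q, k u < q →
      ∃ᶠ z in 𝓝[>] u, slope (fun t => ‖g t - g a‖) u z < q := by
    intro u hu q hq
    refine (((hk_right u hu).eventually_lt_const hq).and
      (Ioc_mem_nhdsGT_of_mem ⟨le_rfl, hu.2⟩)).mono ?_ |>.frequently
    rintro z ⟨hkz, huz, hzb⟩
    rw [slope_def_field, div_lt_iff₀ (sub_pos.2 huz)]
    calc ‖g z - g a‖ - ‖g u - g a‖ ≤ ‖g z - g u‖ := by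
          simpa using norm_sub_norm_le (g z - g a) (g u - g a)
      _ ≤ k z * (z - u) := hg u z hu.1 huz hzb
      _ < q * (z - u) := by gcongr
  simpa using image_le_of_liminf_slope_right_le_deriv_boundary
    ((hg_lip.continuousOn.sub continuousOn_const).norm) (by simp) hprim_cont hprim_deriv hslope
    (right_mem_Icc.2 hab)

theorem integral_sub_integral_of_continuousOn {E : Type*} [NormedAddCommGroup E]
    [NormedSpace ℝ E] {f : ℝ → E} {a b u v : ℝ} (hf : ContinuousOn f (Icc a b))
    (hu : u ∈ Icc a b) (hv : v ∈ Icc a b) :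
    (∫ t in a..v, f t) - ∫ t in a..u, f t = ∫ t in u..v, f t := by
  have ha : a ∈ Icc a b := left_mem_Icc.2 (hu.1.trans hu.2)
  exact integral_interval_sub_left (hf.mono (uIcc_subset_Icc ha hv)).intervalIntegrable
    (hf.mono (uIcc_subset_Icc ha hu)).intervalIntegrable

theorem exists_lipschitzWith_one_of_norm_sub_le {E : Type*} [NormedAddCommGroup E]
    [NormedSpace ℝ E] {y₁ y₂ : E} {s₀ s₁ : ℝ} (h : ‖y₂ - y₁‖ ≤ s₁ - s₀) :
    ∃ γ : ℝ → E, LipschitzWith 1 γ ∧ γ s₀ = y₁ ∧ γ s₁ = y₂ := by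
  set v : E := (s₁ - s₀)⁻¹ • (y₂ - y₁)
  have hv : ‖v‖ ≤ 1 := by
    rw [norm_smul, norm_inv, Real.norm_eq_abs, abs_of_nonneg ((norm_nonneg _).trans h),
      inv_mul_eq_div]
    exact div_le_one_of_le₀ h ((norm_nonneg _).trans h)
  refine ⟨fun t => y₁ + (t - s₀) • v, LipschitzWith.of_dist_le_mul fun t t' => ?_, by simp, ?_⟩
  · rw [dist_add_left, dist_eq_norm, ← sub_smul, sub_sub_sub_cancel_right, norm_smul,
      NNReal.coe_one, one_mul, Real.dist_eq, Real.norm_eq_abs]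
    exact mul_le_of_le_one_right (abs_nonneg _) hv
  · rcases ((norm_nonneg _).trans h).eq_or_lt with hd | hd
    · rw [← hd, norm_le_zero_iff, sub_eq_zero] at h
      simp [v, h]
    · simp [v, smul_inv_smul₀ hd.ne']

theorem monotone_and_le_of_monotoneOn_of_map_le {α : Type*} [Preorder α] {f : α → α}
    {r : ℕ → α} {ρ : α} (hr : ∀ n, r (n + 1) = f (r n)) (hf : MonotoneOn f (Icc (r 0) ρ))
    (h0 : r 0 ≤ f (r 0)) (hρ₀ : r 0 ≤ ρ) (hfρ : f ρ ≤ ρ) : Monotone r ∧ ∀ n, r n ≤ ρ := by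
  have key : ∀ n, r n ∈ Icc (r 0) ρ ∧ r n ≤ r (n + 1) := by
    intro n
    induction n with
    | zero => exact ⟨⟨le_rfl, hρ₀⟩, (hr 0).symm ▸ h0⟩
    | succ n ih =>
      have hle : r (n + 1) ≤ ρ := by
        rw [hr n]
        exact (hf ih.1 ⟨hρ₀, le_rfl⟩ ih.1.2).trans hfρ
      have hmem : r (n + 1) ∈ Icc (r 0) ρ := ⟨ih.1.1.trans ih.2, hle⟩
      exact ⟨hmem, by rw [hr n, hr (n + 1)]; exact hf ih.1 hmem ih.2⟩
  exact ⟨monotone_nat_of_le_succ fun n => (key n).2, fun n => (key n).1.2⟩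

section VariableLipschitz

variable {X : Type*} [NormedAddCommGroup X] [NormedSpace ℝ X] {x₀ : X} {R : ℝ} {A : X → X}
  {k : ℝ → ℝ}
  (hk_cont : ContinuousOn k (Icc 0 R)) (hk_nonneg : ∀ t ∈ Icc (0 : ℝ) R, 0 ≤ k t)
  (hLip : ∀ x₁ x₂ : X, ∀ r : ℝ, ‖x₁ - x₀‖ ≤ r → ‖x₂ - x₀‖ ≤ r →
    0 < r → r ≤ R → ‖A x₁ - A x₂‖ ≤ k r * ‖x₁ - x₂‖)
include hk_cont hk_nonneg hLip

theorem norm_map_sub_le_integral {s₀ s₁ : ℝ} (hs₀ : 0 ≤ s₀) (hs₁ : s₁ ≤ R) {y₁ y₂ : X}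
    (hy₁ : ‖y₁ - x₀‖ ≤ s₀) (hy : ‖y₂ - y₁‖ ≤ s₁ - s₀) :
    ‖A y₂ - A y₁‖ ≤ ∫ t in s₀..s₁, k t := by
  have hs : s₀ ≤ s₁ := by linarith [norm_nonneg (y₂ - y₁)]
  obtain ⟨γ, hγ, rfl, rfl⟩ := exists_lipschitzWith_one_of_norm_sub_le hy
  have hγ_sub : ∀ t t', t ≤ t' → ‖γ t' - γ t‖ ≤ t' - t := fun t t' h => by
    simpa [dist_eq_norm, Real.dist_eq, abs_of_nonneg (sub_nonneg.2 h)] using hγ.dist_le_mul t' t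
  have hγ_ball : ∀ t, s₀ ≤ t → ‖γ t - x₀‖ ≤ t := fun t h => by
    linarith [norm_sub_le_norm_sub_add_norm_sub (γ t) (γ s₀) x₀, hγ_sub s₀ t h]
  refine norm_sub_le_integral_of_norm_sub_le_mul (g := fun t => A (γ t)) hs
    (hk_cont.mono (Icc_subset_Icc hs₀ hs₁)) fun t t' ht htt' ht' => ?_
  have ht'_pos : 0 < t' := hs₀.trans_lt (ht.trans_lt htt')
  calc ‖A (γ t') - A (γ t)‖ ≤ k t' * ‖γ t' - γ t‖ :=
        hLip _ _ t' (hγ_ball t' (ht.trans htt'.le)) ((hγ_ball t ht).trans htt'.le) ht'_pos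
          (ht'.trans hs₁)
    _ ≤ k t' * (t' - t) :=
        mul_le_mul_of_nonneg_left (hγ_sub t t' htt'.le) (hk_nonneg t' ⟨ht'_pos.le, ht'.trans hs₁⟩)

theorem norm_iterate_sub_le_of_integral_majorant {x : ℕ → X} {r : ℕ → ℝ}
    (hx_succ : ∀ n, x (n + 1) = A (x n)) (hr_mem : ∀ n, r n ∈ Icc 0 R)
    (hr_succ : ∀ n, r (n + 2) - r (n + 1) = ∫ t in r n..r (n + 1), k t)
    (h0 : ‖x 0 - x₀‖ ≤ r 0) (h1 : ‖x 1 - x 0‖ ≤ r 1 - r 0) (n : ℕ) :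
    ‖x n - x₀‖ ≤ r n ∧ ‖x (n + 1) - x n‖ ≤ r (n + 1) - r n := by
  induction n with
  | zero => exact ⟨h0, h1⟩
  | succ n ih =>
    have hxn : ‖x (n + 1) - x₀‖ ≤ r (n + 1) := by
      linarith [norm_sub_le_norm_sub_add_norm_sub (x (n + 1)) (x n) x₀]
    refine ⟨hxn, ?_⟩
    have := norm_map_sub_le_integral hk_cont hk_nonneg hLip (hr_mem n).1 (hr_mem (n + 1)).2
      ih.1 ih.2
    rwa [← hx_succ, ← hx_succ, ← hr_succ] at this

end VariableLipschitz

theorem successive_approximations_majorized_general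
    {X : Type*} [NormedAddCommGroup X] [NormedSpace ℝ X]
    (x₀ : X) (R : ℝ) (A : X → X) (k : ℝ → ℝ)
    (hk_cont : ContinuousOn k (Set.Icc 0 R))
    (hk_nonneg : ∀ t ∈ Set.Icc (0 : ℝ) R, 0 ≤ k t)
    (hLip : ∀ x₁ x₂ : X, ∀ r : ℝ, ‖x₁ - x₀‖ ≤ r → ‖x₂ - x₀‖ ≤ r →
      0 < r → r ≤ R → ‖A x₁ - A x₂‖ ≤ k r * ‖x₁ - x₂‖)
    (a : ℝ) (ha : a = ‖A x₀ - x₀‖)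
    (aplus : ℝ → ℝ) (haplus : ∀ r : ℝ, aplus r = a + ∫ t in (0 : ℝ)..r, k t)
    (hfix : ∃ ρ ∈ Set.Icc (0 : ℝ) R, aplus ρ = ρ)
    (r : ℕ → ℝ) (hr0 : r 0 = 0) (hr_succ : ∀ n : ℕ, r (n + 1) = aplus (r n))
    (x : ℕ → X) (hx0 : x 0 = x₀) (hx_succ : ∀ n : ℕ, x (n + 1) = A (x n)) :
    ∀ n : ℕ, ‖x n - x₀‖ ≤ r n ∧ r n ≤ R ∧ ‖x (n + 1) - x n‖ ≤ r (n + 1) - r n := by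
  obtain ⟨ρ, ⟨hρ₀, hρR⟩, hρ⟩ := hfix
  have haplus_sub : ∀ u ∈ Icc 0 R, ∀ v ∈ Icc 0 R, aplus v - aplus u = ∫ t in u..v, k t :=
    fun u hu v hv => by
      rw [haplus, haplus, add_sub_add_left_eq_sub,
        integral_sub_integral_of_continuousOn hk_cont hu hv]
  have haplus_mono : MonotoneOn aplus (Icc 0 R) := fun u hu v hv huv =>
    sub_nonneg.1 <| (haplus_sub u hu v hv).symm ▸ integral_nonneg huv fun t ht =>
      hk_nonneg t ⟨hu.1.trans ht.1, ht.2.trans hv.2⟩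
  obtain ⟨hr_mono, hr_le⟩ := monotone_and_le_of_monotoneOn_of_map_le hr_succ
    (hr0 ▸ haplus_mono.mono (Icc_subset_Icc_right hρR)) (by simp [hr0, haplus, ha])
    (hr0 ▸ hρ₀) hρ.le
  have hr_mem : ∀ n, r n ∈ Icc 0 R := fun n => ⟨hr0 ▸ hr_mono n.zero_le, (hr_le n).trans hρR⟩
  have hmaj := norm_iterate_sub_le_of_integral_majorant hk_cont hk_nonneg hLip hx_succ hr_mem
    (fun n => by rw [← haplus_sub _ (hr_mem n) _ (hr_mem (n + 1)), ← hr_succ, ← hr_succ])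
    (by simp [hx0, hr0]) (by simp [hx_succ, hx0, hr_succ, hr0, haplus, ha])
  exact fun n => ⟨(hmaj n).1, (hr_mem n).2, (hmaj n).2⟩

/-- The successive approximations `x_{n+1} = A x_n` starting from the center `x₀`
stay in the ball `B[x₀,R]` and are majorized by the scalar iterates
`r₀ = 0`, `r_{n+1} = a₊(r_n)`. -/
theorem successive_approximations_majorized
    {X : Type*} [NormedAddCommGroup X] [NormedSpace ℝ X] [CompleteSpace X]
    (x₀ : X) (R : ℝ) (hR : 0 < R) (A : X → X) (k : ℝ → ℝ)
    (hk_cont : ContinuousOn k (Set.Icc 0 R))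
    (hk_nonneg : ∀ t ∈ Set.Icc (0 : ℝ) R, 0 ≤ k t)
    (hLip : ∀ x₁ x₂ : X, ∀ r : ℝ, ‖x₁ - x₀‖ ≤ r → ‖x₂ - x₀‖ ≤ r →
      0 < r → r ≤ R → ‖A x₁ - A x₂‖ ≤ k r * ‖x₁ - x₂‖)
    (a : ℝ) (ha : a = ‖A x₀ - x₀‖)
    (aplus : ℝ → ℝ) (haplus : ∀ r : ℝ, aplus r = a + ∫ t in (0 : ℝ)..r, k t)
    (hfix : ∃ ρ ∈ Set.Icc (0 : ℝ) R, aplus ρ = ρ)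
    (r : ℕ → ℝ) (hr0 : r 0 = 0) (hr_succ : ∀ n : ℕ, r (n + 1) = aplus (r n))
    (x : ℕ → X) (hx0 : x 0 = x₀) (hx_succ : ∀ n : ℕ, x (n + 1) = A (x n)) :
    ∀ n : ℕ, ‖x n - x₀‖ ≤ r n ∧ r n ≤ R ∧ ‖x (n + 1) - x n‖ ≤ r (n + 1) - r n :=
  successive_approximations_majorized_general x₀ R A k hk_cont hk_nonneg hLip a ha aplus haplus hfix
    r hr0 hr_succ x hx0 hx_succ
end

section
/- Let X be a real Banach space, x₀ ∈ X, R > 0, and let A satisfy the variable Lipschitz condition on B[x₀,R] with a continuous nonnegative function k on [0,R]. Set a = ‖A x₀ − x₀‖, a₊(r) = a + ∫₀^r k(t) dt, assume a₊ has a fixed point in [0,R], and let r* be its smallest fixed point in [0,R]. Define r₀ = 0, r_{n+1} = a₊(r_n), and x_{n+1} = A x_n starting from x₀. Then the sequence (x_n) converges to a point x* with A x* = x*, ‖x* − x₀‖ ≤ r*, and the a priori error estimate ‖x* − x_n‖ ≤ r* − r_n holds for all n. -/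
/-!
By induction, `‖x n - x₀‖ ≤ r n` and `‖x (n + 1) - x n‖ ≤ r (n + 1) - r n`. For the inductive
step, run along the segment `γ` from `x n` to `x (n + 1)`, parametrised by
`t ∈ [r n, r (n + 1)]` so that `γ t` stays in `B[x₀, t]`; the variable Lipschitz
condition bounds the right slopes of `t ↦ ‖A (γ t) - A (x n)‖` by `k t`, whence
`‖A (x (n + 1)) - A (x n)‖ ≤ ∫_{r n}^{r (n + 1)} k = r (n + 2) - r (n + 1)`.
The increasing sequence `r n` converges to a fixed point of the continuous majorant below `r*`,
hence to `r*`; so `x` is Cauchy with the stated error bound, and its limit is fixed by `A`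
because `A` is continuous on `B[x₀, R]`.
-/

open Set Filter Topology

theorem sub_le_integral_of_sub_le_mul {f k : ℝ → ℝ} {a b : ℝ} (hab : a ≤ b)
    (hf : ContinuousOn f (Icc a b)) (hk : ContinuousOn k (Icc a b))
    (h : ∀ t z, a ≤ t → t < z → z ≤ b → f z - f t ≤ k z * (z - t)) :
    f b - f a ≤ ∫ t in a..b, k t := by
  have hk_int : ∀ x ∈ Icc a b, IntervalIntegrable k MeasureTheory.volume a x := fun x hx =>
    (hk.mono (uIcc_subset_Icc (left_mem_Icc.2 hab) hx)).intervalIntegrable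
  have hnhds : ∀ x ∈ Ico a b, Icc a b ∈ 𝓝[>] x := fun x hx => Icc_mem_nhdsGT_of_mem hx
  have hk_right : ∀ x ∈ Ico a b, ContinuousWithinAt k (Ioi x) x := fun x hx =>
    (hk x (Ico_subset_Icc_self hx)).mono_of_mem_nhdsWithin (hnhds x hx)
  have hprim : ContinuousOn (fun y => ∫ t in a..y, k t) (Icc a b) := by
    simpa [uIcc_of_le hab] using intervalIntegral.continuousOn_primitive_interval'
      (hk_int b (right_mem_Icc.2 hab)) left_mem_uIcc
  have hderiv : ∀ x ∈ Ico a b,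
      HasDerivWithinAt (fun y => f a + ∫ t in a..y, k t) (k x) (Ici x) x := fun x hx =>
    (intervalIntegral.integral_hasDerivWithinAt_right (t := Ioi x)
      (hk_int x (Ico_subset_Icc_self hx))
      ((hk.stronglyMeasurableAtFilter_nhdsWithin measurableSet_Icc x).filter_mono
        (nhdsWithin_le_of_mem (hnhds x hx)))
      (hk_right x hx)).const_add (f a)
  have hslope : ∀ x ∈ Ico a b, ∀ r, k x < r → ∃ᶠ z in 𝓝[>] x, slope f x z < r := by
    intro x hx r hr
    have hlt : ∀ᶠ z in 𝓝[>] x, k z < r := (hk_right x hx).eventually (gt_mem_nhds hr)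
    refine (hlt.and (Ioc_mem_nhdsGT hx.2)).frequently.mono fun z ⟨hkz, hz⟩ => ?_
    rw [slope_def_field, div_lt_iff₀ (sub_pos.2 hz.1)]
    calc f z - f x ≤ k z * (z - x) := h x z hx.1 hz.1 hz.2
      _ < r * (z - x) := mul_lt_mul_of_pos_right hkz (sub_pos.2 hz.1)
  have := image_le_of_liminf_slope_right_le_deriv_boundary hf
    (B := fun y => f a + ∫ t in a..y, k t) (by simp) (continuousOn_const.add hprim) hderiv hslope
    (right_mem_Icc.2 hab)
  linarith

theorem norm_sub_le_sub_of_norm_succ_sub_le {E : Type*} [SeminormedAddCommGroup E] {x : ℕ → E}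
    {r : ℕ → ℝ} (hx : ∀ n, ‖x (n + 1) - x n‖ ≤ r (n + 1) - r n) {n m : ℕ} (hnm : n ≤ m) :
    ‖x m - x n‖ ≤ r m - r n := by
  induction m, hnm using Nat.le_induction with
  | base => simp
  | succ m _ ih =>
    linarith [norm_sub_le_norm_sub_add_norm_sub (x (m + 1)) (x m) (x n), hx m]

theorem exists_tendsto_norm_sub_le_of_norm_succ_sub_le {E : Type*} [NormedAddCommGroup E]
    [CompleteSpace E] {x : ℕ → E} {r : ℕ → ℝ} {s : ℝ}
    (hx : ∀ n, ‖x (n + 1) - x n‖ ≤ r (n + 1) - r n) (hr : Tendsto r atTop (𝓝 s)) :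
    ∃ y, Tendsto x atTop (𝓝 y) ∧ ∀ n, ‖y - x n‖ ≤ s - r n := by
  have hr_mono : Monotone r :=
    monotone_nat_of_le_succ fun n => sub_nonneg.1 ((norm_nonneg _).trans (hx n))
  have hcauchy : CauchySeq x := by
    refine cauchySeq_of_le_tendsto_0' (fun n => s - r n) (fun n m hnm => ?_) ?_
    · rw [dist_comm, dist_eq_norm]
      linarith [norm_sub_le_sub_of_norm_succ_sub_le hx hnm, hr_mono.ge_of_tendsto hr m]
    · simpa using hr.const_sub s
  obtain ⟨y, hy⟩ := cauchySeq_tendsto_of_complete hcauchy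
  refine ⟨y, hy, fun n => le_of_tendsto_of_tendsto ((hy.sub_const (x n)).norm)
    (hr.sub_const (r n)) ?_⟩
  filter_upwards [eventually_ge_atTop n] with m hnm
  exact norm_sub_le_sub_of_norm_succ_sub_le hx hnm

section FixedPointIteration

variable {g : ℝ → ℝ} {R s : ℝ} {r : ℕ → ℝ}

theorem iterate_mem_Icc_of_monotoneOn (hg : MonotoneOn g (Icc 0 R)) (hg0 : 0 ≤ g 0)
    (hs : s ∈ Icc 0 R) (hgs : g s = s) (hr0 : r 0 = 0) (hr : ∀ n, r (n + 1) = g (r n)) :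
    ∀ n, r n ∈ Icc 0 s := by
  intro n
  induction n with
  | zero => simpa [hr0] using hs.1
  | succ n ih =>
    have hrn : r n ∈ Icc 0 R := ⟨ih.1, ih.2.trans hs.2⟩
    rw [hr]
    exact ⟨hg0.trans (hg (left_mem_Icc.2 (hs.1.trans hs.2)) hrn ih.1), hgs ▸ hg hrn hs ih.2⟩

theorem monotone_iterate_of_monotoneOn (hg : MonotoneOn g (Icc 0 R)) (hg0 : 0 ≤ g 0)
    (hr_mem : ∀ n, r n ∈ Icc 0 R) (hr0 : r 0 = 0) (hr : ∀ n, r (n + 1) = g (r n)) :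
    Monotone r := by
  refine monotone_nat_of_le_succ fun n => ?_
  induction n with
  | zero => simpa [hr0, hr] using hg0
  | succ n ih => rw [hr, hr (n + 1)]; exact hg (hr_mem n) (hr_mem (n + 1)) ih

theorem tendsto_least_fixedPoint_of_monotone (hgc : ContinuousOn g (Icc 0 R))
    (hs : s ∈ Icc 0 R) (hmin : ∀ t ∈ Icc 0 R, g t = t → s ≤ t) (hr_mono : Monotone r)
    (hr_mem : ∀ n, r n ∈ Icc 0 s) (hr : ∀ n, r (n + 1) = g (r n)) :
    Tendsto r atTop (𝓝 s) := by
  obtain ⟨L, hL⟩ : ∃ L, Tendsto r atTop (𝓝 L) :=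
    ⟨_, tendsto_atTop_ciSup hr_mono ⟨s, by rintro _ ⟨n, rfl⟩; exact (hr_mem n).2⟩⟩
  have hr_mem_R : ∀ n, r n ∈ Icc 0 R := fun n => ⟨(hr_mem n).1, (hr_mem n).2.trans hs.2⟩
  have hL_mem : L ∈ Icc 0 s := isClosed_Icc.mem_of_tendsto hL (Eventually.of_forall hr_mem)
  have hL_mem_R : L ∈ Icc 0 R := ⟨hL_mem.1, hL_mem.2.trans hs.2⟩
  have hgL : g L = L := by
    refine tendsto_nhds_unique ((hgc L hL_mem_R).tendsto.comp
      (tendsto_nhdsWithin_iff.2 ⟨hL, Eventually.of_forall hr_mem_R⟩)) ?_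
    simpa [Function.comp_def, ← hr] using (tendsto_add_atTop_iff_nat 1).2 hL
  rwa [le_antisymm hL_mem.2 (hmin L hL_mem_R hgL)] at hL

end FixedPointIteration

section VariableLipschitz

variable {X Y : Type*} [NormedAddCommGroup X] [NormedAddCommGroup Y]

def VariableLipschitzOn (A : X → Y) (x₀ : X) (R : ℝ) (k : ℝ → ℝ) : Prop :=
  ∀ x₁ x₂ : X, ∀ r : ℝ, ‖x₁ - x₀‖ ≤ r → ‖x₂ - x₀‖ ≤ r → 0 < r → r ≤ R →
    ‖A x₁ - A x₂‖ ≤ k r * ‖x₁ - x₂‖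

namespace VariableLipschitzOn

variable {A : X → Y} {x₀ : X} {R : ℝ} {k : ℝ → ℝ}

theorem continuousOn (hA : VariableLipschitzOn A x₀ R k) {r : ℝ} (hr : 0 < r) (hrR : r ≤ R) :
    ContinuousOn A (Metric.closedBall x₀ r) := by
  refine (LipschitzOnWith.of_dist_le_mul (K := (k r).toNNReal) fun x hx y hy => ?_).continuousOn
  rw [dist_eq_norm, dist_eq_norm, Real.coe_toNNReal']
  exact (hA x y r (mem_closedBall_iff_norm.1 hx) (mem_closedBall_iff_norm.1 hy) hr hrR).trans
    (mul_le_mul_of_nonneg_right (le_max_left _ _) (norm_nonneg _))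

theorem norm_sub_le_integral [NormedSpace ℝ X] (hA : VariableLipschitzOn A x₀ R k)
    (hk_cont : ContinuousOn k (Icc 0 R)) (hk_nonneg : ∀ t ∈ Icc 0 R, 0 ≤ k t)
    {u v : X} {p q : ℝ} (hp : 0 ≤ p) (hqR : q ≤ R) (hu : ‖u - x₀‖ ≤ p)
    (huv : ‖v - u‖ ≤ q - p) :
    ‖A v - A u‖ ≤ ∫ t in p..q, k t := by
  rcases (sub_nonneg.1 ((norm_nonneg _).trans huv)).eq_or_lt with rfl | hpq
  · rw [sub_self, norm_le_zero_iff, sub_eq_zero] at huv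
    simp [huv]
  set γ : ℝ → X := fun t => AffineMap.lineMap u v ((t - p) / (q - p))
  have hγp : γ p = u := by simp [γ]
  have hγq : γ q = v := by simp [γ, div_self (sub_pos.2 hpq).ne']
  have hγ_lip : ∀ t z, t ≤ z → ‖γ z - γ t‖ ≤ z - t := by
    intro t z htz
    rw [← dist_eq_norm, dist_lineMap_lineMap, Real.dist_eq, ← sub_div, sub_sub_sub_cancel_right,
      abs_div, abs_of_nonneg (sub_nonneg.2 htz), abs_of_pos (sub_pos.2 hpq), dist_comm,
      dist_eq_norm, div_mul_eq_mul_div, div_le_iff₀ (sub_pos.2 hpq)]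
    exact mul_le_mul_of_nonneg_left huv (sub_nonneg.2 htz)
  have hγ_ball : ∀ t ∈ Icc p q, ‖γ t - x₀‖ ≤ t := fun t ht => by
    linarith [norm_sub_le_norm_sub_add_norm_sub (γ t) (γ p) x₀, hγ_lip p t ht.1, hγp ▸ hu]
  have hstep : ∀ t z, p ≤ t → t < z → z ≤ q →
      ‖A (γ z) - A u‖ - ‖A (γ t) - A u‖ ≤ k z * (z - t) := by
    intro t z hpt htz hzq
    have hz : z ∈ Icc p q := ⟨hpt.trans htz.le, hzq⟩
    calc ‖A (γ z) - A u‖ - ‖A (γ t) - A u‖ ≤ ‖A (γ z) - A (γ t)‖ := by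
          simpa using norm_sub_norm_le (A (γ z) - A u) (A (γ t) - A u)
      _ ≤ k z * ‖γ z - γ t‖ := hA _ _ z (hγ_ball z hz)
          ((hγ_ball t ⟨hpt, htz.le.trans hzq⟩).trans htz.le) (hp.trans_lt (hpt.trans_lt htz))
          (hzq.trans hqR)
      _ ≤ k z * (z - t) := mul_le_mul_of_nonneg_left (hγ_lip t z htz.le)
          (hk_nonneg z ⟨hp.trans hz.1, hzq.trans hqR⟩)
  have hcont : ContinuousOn (fun t => ‖A (γ t) - A u‖) (Icc p q) :=
    (((hA.continuousOn (hp.trans_lt hpq) hqR).comp (by fun_prop : Continuous γ).continuousOn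
      fun t ht => mem_closedBall_iff_norm.2 ((hγ_ball t ht).trans ht.2)).sub
      continuousOn_const).norm
  simpa [hγp, hγq] using
    sub_le_integral_of_sub_le_mul hpq.le hcont (hk_cont.mono (Icc_subset_Icc hp hqR)) hstep

end VariableLipschitzOn

end VariableLipschitz

section Majorant

variable {X : Type*} [NormedAddCommGroup X] {A : X → X} {x₀ : X} {R : ℝ} {k : ℝ → ℝ}

noncomputable def majorant (A : X → X) (x₀ : X) (k : ℝ → ℝ) (r : ℝ) : ℝ :=
  ‖A x₀ - x₀‖ + ∫ t in 0..r, k t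

@[simp]
theorem majorant_zero : majorant A x₀ k 0 = ‖A x₀ - x₀‖ := by
  simp [majorant]

theorem majorant_sub_majorant (hk : ContinuousOn k (Icc 0 R)) {s t : ℝ} (hs : s ∈ Icc 0 R)
    (ht : t ∈ Icc 0 R) : majorant A x₀ k t - majorant A x₀ k s = ∫ u in s..t, k u := by
  have hint : ∀ y ∈ Icc 0 R, IntervalIntegrable k MeasureTheory.volume 0 y := fun y hy =>
    (hk.mono (uIcc_subset_Icc (left_mem_Icc.2 (hs.1.trans hs.2)) hy)).intervalIntegrable
  rw [majorant, majorant, add_sub_add_left_eq_sub,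
    intervalIntegral.integral_interval_sub_left (hint t ht) (hint s hs)]

theorem monotoneOn_majorant (hk : ContinuousOn k (Icc 0 R)) (hk_nonneg : ∀ t ∈ Icc 0 R, 0 ≤ k t) :
    MonotoneOn (majorant A x₀ k) (Icc 0 R) := fun s hs t ht hst => by
  rw [← sub_nonneg, majorant_sub_majorant hk hs ht]
  exact intervalIntegral.integral_nonneg hst fun u hu =>
    hk_nonneg u ⟨hs.1.trans hu.1, hu.2.trans ht.2⟩

theorem continuousOn_majorant (hk : ContinuousOn k (Icc 0 R)) :
    ContinuousOn (majorant A x₀ k) (Icc 0 R) := by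
  rcases lt_or_ge R 0 with hR | hR
  · simp [Icc_eq_empty_of_lt hR]
  have hprim := intervalIntegral.continuousOn_primitive_interval (a := 0) (b := R)
    (μ := MeasureTheory.volume) (by rw [uIcc_of_le hR]; exact hk.integrableOn_Icc)
  rw [uIcc_of_le hR] at hprim
  exact continuousOn_const.add hprim

theorem VariableLipschitzOn.norm_iterate_sub_le [NormedSpace ℝ X]
    (hA : VariableLipschitzOn A x₀ R k) (hk_cont : ContinuousOn k (Icc 0 R))
    (hk_nonneg : ∀ t ∈ Icc 0 R, 0 ≤ k t) {r : ℕ → ℝ} {x : ℕ → X}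
    (hr_mem : ∀ n, r n ∈ Icc 0 R) (hr0 : r 0 = 0) (hr : ∀ n, r (n + 1) = majorant A x₀ k (r n))
    (hx0 : x 0 = x₀) (hx : ∀ n, x (n + 1) = A (x n)) :
    ∀ n, ‖x n - x₀‖ ≤ r n ∧ ‖x (n + 1) - x n‖ ≤ r (n + 1) - r n := by
  intro n
  induction n with
  | zero => simp [hx0, hr0, hx, hr]
  | succ n ih =>
    have hball : ‖x (n + 1) - x₀‖ ≤ r (n + 1) := by
      linarith [norm_sub_le_norm_sub_add_norm_sub (x (n + 1)) (x n) x₀]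
    refine ⟨hball, ?_⟩
    calc ‖x (n + 1 + 1) - x (n + 1)‖ = ‖A (x (n + 1)) - A (x n)‖ := by rw [hx (n + 1), hx n]
      _ ≤ ∫ t in r n..r (n + 1), k t :=
        hA.norm_sub_le_integral hk_cont hk_nonneg (hr_mem n).1 (hr_mem (n + 1)).2 ih.1
          (hx n ▸ ih.2)
      _ = r (n + 1 + 1) - r (n + 1) := by
        rw [← majorant_sub_majorant (A := A) (x₀ := x₀) hk_cont (hr_mem n) (hr_mem (n + 1)),
          hr (n + 1), hr n]

end Majorant

/-- Existence part of the majorization fixed point principle: the successive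
approximations `x_{n+1} = A x_n` converge to a fixed point `x*` of `A` with
`‖x* - x₀‖ ≤ r*`, together with the a priori error estimate
`‖x* - x_n‖ ≤ r* - r_n`. -/
theorem majorization_fixed_point_existence
    {X : Type*} [NormedAddCommGroup X] [NormedSpace ℝ X] [CompleteSpace X]
    (x₀ : X) (R : ℝ) (hR : 0 < R) (A : X → X) (k : ℝ → ℝ)
    (hk_cont : ContinuousOn k (Set.Icc 0 R))
    (hk_nonneg : ∀ t ∈ Set.Icc (0 : ℝ) R, 0 ≤ k t)
    (hLip : ∀ x₁ x₂ : X, ∀ r : ℝ, ‖x₁ - x₀‖ ≤ r → ‖x₂ - x₀‖ ≤ r →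
      0 < r → r ≤ R → ‖A x₁ - A x₂‖ ≤ k r * ‖x₁ - x₂‖)
    (a : ℝ) (ha : a = ‖A x₀ - x₀‖)
    (aplus : ℝ → ℝ) (haplus : ∀ r : ℝ, aplus r = a + ∫ t in (0 : ℝ)..r, k t)
    (rstar : ℝ) (hrstar_mem : rstar ∈ Set.Icc (0 : ℝ) R)
    (hrstar_fix : aplus rstar = rstar)
    (hrstar_min : ∀ s ∈ Set.Icc (0 : ℝ) R, aplus s = s → rstar ≤ s)
    (r : ℕ → ℝ) (hr0 : r 0 = 0) (hr_succ : ∀ n : ℕ, r (n + 1) = aplus (r n))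
    (x : ℕ → X) (hx0 : x 0 = x₀) (hx_succ : ∀ n : ℕ, x (n + 1) = A (x n)) :
    ∃ xstar : X, Filter.Tendsto x Filter.atTop (nhds xstar) ∧
      A xstar = xstar ∧ ‖xstar - x₀‖ ≤ rstar ∧
      ∀ n : ℕ, ‖xstar - x n‖ ≤ rstar - r n := by
  obtain rfl : aplus = majorant A x₀ k := funext fun s => by rw [haplus, ha, majorant]
  have hmono : MonotoneOn (majorant A x₀ k) (Icc 0 R) := monotoneOn_majorant hk_cont hk_nonneg
  have ha0 : 0 ≤ majorant A x₀ k 0 := by simp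
  have hr_mem := iterate_mem_Icc_of_monotoneOn hmono ha0 hrstar_mem hrstar_fix hr0 hr_succ
  have hr_mem_R : ∀ n, r n ∈ Icc 0 R := fun n => ⟨(hr_mem n).1, (hr_mem n).2.trans hrstar_mem.2⟩
  have hr_mono := monotone_iterate_of_monotoneOn hmono ha0 hr_mem_R hr0 hr_succ
  have hr_lim := tendsto_least_fixedPoint_of_monotone (continuousOn_majorant hk_cont) hrstar_mem
    hrstar_min hr_mono hr_mem hr_succ
  have hx_est := VariableLipschitzOn.norm_iterate_sub_le hLip hk_cont hk_nonneg hr_mem_R hr0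
    hr_succ hx0 hx_succ
  obtain ⟨xstar, hx_lim, herr⟩ :=
    exists_tendsto_norm_sub_le_of_norm_succ_sub_le (fun n => (hx_est n).2) hr_lim
  have hxstar : ‖xstar - x₀‖ ≤ rstar := by simpa [hx0, hr0] using herr 0
  refine ⟨xstar, hx_lim, tendsto_nhds_unique ?_ ((tendsto_add_atTop_iff_nat 1).2 hx_lim),
    hxstar, herr⟩
  have hx_ball : ∀ n, x n ∈ Metric.closedBall x₀ R := fun n =>
    mem_closedBall_iff_norm.2 ((hx_est n).1.trans (hr_mem_R n).2)
  have hA_cont := VariableLipschitzOn.continuousOn hLip hR le_rfl xstar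
    (mem_closedBall_iff_norm.2 (hxstar.trans hrstar_mem.2))
  simpa only [hx_succ, Function.comp_def] using
    hA_cont.tendsto.comp (tendsto_nhdsWithin_iff.2 ⟨hx_lim, Eventually.of_forall hx_ball⟩)
end

section
/- (Lemarié–Rieusset type equation.) Let X be a real Banach space, m ≥ 2 an integer, T : X^m → X a continuous m-multilinear map with ‖T(y₁,…,y_m)‖ ≤ C ‖y₁‖⋯‖y_m‖ for some C > 0, and η ∈ X with a = ‖η‖ < ((m−1)/m) · (1/(C m))^{1/(m−1)}. Let r* be the smallest nonnegative root of a + C r^m = r and r_* the smallest nonnegative root of a − C r^m = r. Then there exists a unique x* ∈ X with ‖x*‖ ≤ (1/(C m))^{1/(m−1)} satisfying x* = η + T(x*,…,x*), and this solution satisfies r_* ≤ ‖x*‖ ≤ r*. -/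
/-!
Put `R = (1/(Cm))^{1/(m-1)}`, so that `C m R^{m-1} = 1`; the smallness of `a` is exactly
`a + C R^m < R`, hence the smallest root `r*` of `a + C r^m = r` lies in `[0, R)`. On the closed
ball of radius `r*` the map `x ↦ η + T(x,…,x)` is a self-map with Lipschitz constant
`C m r*^{m-1} < 1`, and Banach's theorem gives `x*`. A solution `y` with `‖y‖ ≤ R` satisfies
`‖y‖ ≤ a + C‖y‖^m`; the convex function `t ↦ a + C t^m - t` vanishes at `r*` and is negative at
`R`, so it is negative on `(r*, R]` and `‖y‖ ≤ r*`, whence `y = x*`. Finally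
`a ≤ ‖x*‖ + C‖x*‖^m`, and `t ↦ t + C t^m` is increasing, which gives `r_* ≤ ‖x*‖`.
-/

open Metric Set Function NNReal

theorem existsUnique_isFixedPt_of_lipschitzOnWith {α : Type*} [MetricSpace α] [CompleteSpace α]
    {f : α → α} {s : Set α} {K : ℝ≥0} (hs : IsClosed s) (hne : s.Nonempty) (hsf : MapsTo f s s)
    (hK : K < 1) (hf : LipschitzOnWith K f s) : ∃! x, x ∈ s ∧ IsFixedPt f x := by
  have := hs.completeSpace_coe
  have : Nonempty s := hne.to_subtype
  have hc : ContractingWith K (hsf.restrict f s s) := ⟨hK, hf.mapsToRestrict hsf⟩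
  refine ⟨hc.fixedPoint, ⟨Subtype.prop _, congrArg Subtype.val hc.fixedPoint_isFixedPt⟩, ?_⟩
  rintro x ⟨hxs, hx⟩
  exact congrArg Subtype.val (hc.fixedPoint_unique (x := ⟨x, hxs⟩) (Subtype.ext hx))

theorem rpow_one_div_sub_one_pow {b : ℝ} (hb : 0 ≤ b) {m : ℕ} (hm : 1 < m) :
    (b ^ ((1 : ℝ) / ((m : ℝ) - 1))) ^ (m - 1) = b := by
  have : (m : ℝ) - 1 = ((m - 1 : ℕ) : ℝ) := by rw [Nat.cast_sub hm.le, Nat.cast_one]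
  rw [this, one_div, Real.rpow_inv_natCast_pow hb (by omega)]

theorem add_mul_pow_lt_self {a C R : ℝ} {m : ℕ} (hm : m ≠ 0) (hCR : C * m * R ^ (m - 1) = 1)
    (ha : a < ((m : ℝ) - 1) / m * R) : a + C * R ^ m < R := by
  have hm' : (0 : ℝ) < m := by positivity
  have hpow : C * R ^ m = R / m := by
    rw [← pow_sub_one_mul hm, eq_div_iff hm'.ne']
    linear_combination R * hCR
  have hsplit : ((m : ℝ) - 1) / m * R + R / m = R := by field_simp; ring
  linarith

theorem lt_of_forall_root_le {f : ℝ → ℝ} {r R : ℝ} (hR0 : 0 ≤ R)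
    (hf : ContinuousOn f (Icc 0 R)) (h0 : 0 ≤ f 0) (hR : f R < 0) (hr : f r = 0)
    (hmin : ∀ s, 0 ≤ s → f s = 0 → r ≤ s) : r < R := by
  obtain ⟨s, ⟨hs0, hsR⟩, hs⟩ := intermediate_value_Icc' hR0 hf ⟨hR.le, h0⟩
  refine ((hmin s hs0 hs).trans hsR).lt_of_ne ?_
  rintro rfl
  exact hR.ne hr

theorem le_of_le_add_mul_pow {a C r R s : ℝ} {m : ℕ} (hC : 0 ≤ C) (hr : 0 ≤ r)
    (hroot : a + C * r ^ m = r) (hR : a + C * R ^ m < R) (hsR : s ≤ R)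
    (hs : s ≤ a + C * s ^ m) : s ≤ r := by
  by_contra! hrs
  obtain rfl | hsR := hsR.eq_or_lt
  · linarith
  have hf : ConvexOn ℝ (Ici 0) fun t : ℝ => C * t ^ m + (a - t) :=
    ((convexOn_pow m).smul hC).add
      ((convexOn_const a (convex_Ici 0)).sub (concaveOn_id (convex_Ici 0)))
  have hseg : s ∈ openSegment ℝ r R := by
    rw [openSegment_eq_Ioo (hrs.trans hsR)]
    exact ⟨hrs, hsR⟩
  have hfs := hf.le_right_of_left_le hr (hr.trans (hrs.trans hsR).le) hseg (by linarith)
  linarith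

theorem le_of_sub_mul_pow_le {a C r s : ℝ} {m : ℕ} (hC : 0 ≤ C) (hs : 0 ≤ s)
    (hroot : a - C * r ^ m = r) (h : a - C * s ^ m ≤ s) : r ≤ s := by
  by_contra! hsr
  have := mul_le_mul_of_nonneg_left (pow_le_pow_left₀ hs hsr.le m) hC
  linarith

namespace ContinuousMultilinearMap

variable {X : Type*} [NormedAddCommGroup X] [NormedSpace ℝ X] {m : ℕ}
  {T : ContinuousMultilinearMap ℝ (fun _ : Fin m => X) X} {C : ℝ}

theorem norm_apply_const_le (hT : ∀ y : Fin m → X, ‖T y‖ ≤ C * ∏ i, ‖y i‖) (x : X) :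
    ‖T (fun _ => x)‖ ≤ C * ‖x‖ ^ m := by
  simpa using hT fun _ => x

theorem norm_apply_const_sub_le [NeZero m] (hC : 0 ≤ C)
    (hT : ∀ y : Fin m → X, ‖T y‖ ≤ C * ∏ i, ‖y i‖) (x y : X) :
    ‖T (fun _ => x) - T (fun _ => y)‖ ≤ C * m * max ‖x‖ ‖y‖ ^ (m - 1) * ‖x - y‖ := by
  have hsub : ((fun _ => x) - fun _ => y : Fin m → X) = fun _ => x - y := rfl
  simpa [hsub] using T.toMultilinearMap.norm_image_sub_le_of_bound hC hT (fun _ => x) (fun _ => y)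

theorem abs_norm_sub_norm_le_of_eq_add (hT : ∀ y : Fin m → X, ‖T y‖ ≤ C * ∏ i, ‖y i‖) {η x : X}
    (hx : x = η + T (fun _ => x)) : |‖x‖ - ‖η‖| ≤ C * ‖x‖ ^ m := by
  calc |‖x‖ - ‖η‖| ≤ ‖x - η‖ := abs_norm_sub_norm_le x η
    _ = ‖T (fun _ => x)‖ := by rw [eq_sub_of_add_eq' hx.symm]
    _ ≤ C * ‖x‖ ^ m := norm_apply_const_le hT x

theorem existsUnique_eq_add_apply_const [CompleteSpace X] [NeZero m] (hC : 0 ≤ C)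
    (hT : ∀ y : Fin m → X, ‖T y‖ ≤ C * ∏ i, ‖y i‖) (η : X) {r : ℝ} (hr : 0 ≤ r)
    (hself : ‖η‖ + C * r ^ m ≤ r) (hcontr : C * m * r ^ (m - 1) < 1) :
    ∃! x, x ∈ closedBall (0 : X) r ∧ x = η + T (fun _ => x) := by
  have hmaps : MapsTo (fun x : X => η + T (fun _ => x)) (closedBall 0 r) (closedBall 0 r) := by
    intro x hx
    rw [mem_closedBall_zero_iff] at hx ⊢
    calc ‖η + T (fun _ => x)‖ ≤ ‖η‖ + C * ‖x‖ ^ m :=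
          (norm_add_le _ _).trans (by gcongr; exact norm_apply_const_le hT x)
      _ ≤ ‖η‖ + C * r ^ m := by gcongr
      _ ≤ r := hself
  have hlip : LipschitzOnWith (C * m * r ^ (m - 1)).toNNReal (fun x : X => η + T (fun _ => x))
      (closedBall 0 r) := by
    refine LipschitzOnWith.of_dist_le' fun x hx y hy => ?_
    rw [mem_closedBall_zero_iff] at hx hy
    rw [dist_eq_norm, dist_eq_norm, add_sub_add_left_eq_sub]
    refine (norm_apply_const_sub_le hC hT x y).trans ?_
    gcongr
    exact max_le hx hy
  simpa only [IsFixedPt, eq_comm] using existsUnique_isFixedPt_of_lipschitzOnWith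
    isClosed_closedBall (nonempty_closedBall.2 hr) hmaps (Real.toNNReal_lt_one.2 hcontr) hlip

end ContinuousMultilinearMap

open ContinuousMultilinearMap in
theorem lemarie_rieusset_equation_general
    {X : Type*} [NormedAddCommGroup X] [NormedSpace ℝ X] [CompleteSpace X]
    (m : ℕ) (hm : 2 ≤ m)
    (T : ContinuousMultilinearMap ℝ (fun _ : Fin m => X) X)
    (C : ℝ) (hC : 0 < C) (hT : ∀ y : Fin m → X, ‖T y‖ ≤ C * ∏ i, ‖y i‖)
    (η : X) (a : ℝ) (ha : a = ‖η‖)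
    (ha_cr : a < (((m : ℝ) - 1) / m) * (1 / (C * m)) ^ ((1 : ℝ) / ((m : ℝ) - 1)))
    (rstar : ℝ) (hrstar_nonneg : 0 ≤ rstar)
    (hrstar_root : a + C * rstar ^ m = rstar)
    (hrstar_min : ∀ s : ℝ, 0 ≤ s → a + C * s ^ m = s → rstar ≤ s)
    (rlow : ℝ)
    (hrlow_root : a - C * rlow ^ m = rlow) :
    ∃ xstar : X,
      (‖xstar‖ ≤ (1 / (C * m)) ^ ((1 : ℝ) / ((m : ℝ) - 1)) ∧
        xstar = η + T (fun _ => xstar) ∧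
        rlow ≤ ‖xstar‖ ∧ ‖xstar‖ ≤ rstar) ∧
      ∀ y : X, ‖y‖ ≤ (1 / (C * m)) ^ ((1 : ℝ) / ((m : ℝ) - 1)) →
        y = η + T (fun _ => y) → y = xstar := by
  have : NeZero m := ⟨by omega⟩
  set R := (1 / (C * m)) ^ ((1 : ℝ) / ((m : ℝ) - 1))
  have hR0 : 0 ≤ R := by positivity
  have hCR : C * m * R ^ (m - 1) = 1 := by
    rw [rpow_one_div_sub_one_pow (by positivity) (by omega)]
    field_simp
  have hR : a + C * R ^ m < R := add_mul_pow_lt_self (NeZero.ne m) hCR ha_cr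
  have hrR : rstar < R := lt_of_forall_root_le (f := fun t => a + C * t ^ m - t) hR0
    (by fun_prop) (by simp [ha, zero_pow (NeZero.ne m)]) (by linarith) (by simp [hrstar_root])
    fun s hs hs' => hrstar_min s hs (sub_eq_zero.1 hs')
  have hcontr : C * m * rstar ^ (m - 1) < 1 := hCR ▸ by gcongr; omega
  obtain ⟨x, ⟨hx_ball, hx⟩, hx_unique⟩ :=
    existsUnique_eq_add_apply_const hC.le hT η hrstar_nonneg (ha ▸ hrstar_root.le) hcontr
  rw [mem_closedBall_zero_iff] at hx_ball
  have hx_norm := abs_le.1 (abs_norm_sub_norm_le_of_eq_add hT hx)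
  refine ⟨x, ⟨hx_ball.trans hrR.le, hx, ?_, hx_ball⟩, fun y hyR hy => hx_unique y ⟨?_, hy⟩⟩
  · exact le_of_sub_mul_pow_le hC.le (norm_nonneg x) hrlow_root (by rw [ha]; linarith)
  · have hy_norm := abs_le.1 (abs_norm_sub_norm_le_of_eq_add hT hy)
    exact mem_closedBall_zero_iff.2 <| le_of_le_add_mul_pow hC.le hrstar_nonneg hrstar_root hR hyR
      (by rw [ha]; linarith)

/-- Lemarié–Rieusset type equation `x = η + T(x,…,x)` for a bounded
`m`-multilinear operator `T`: if `a = ‖η‖` is below the critical value,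
the equation has a unique solution in the ball of radius `(1/(Cm))^{1/(m-1)}`,
and this solution satisfies `r_* ≤ ‖x*‖ ≤ r*`. -/
theorem lemarie_rieusset_equation
    {X : Type*} [NormedAddCommGroup X] [NormedSpace ℝ X] [CompleteSpace X]
    (m : ℕ) (hm : 2 ≤ m)
    (T : ContinuousMultilinearMap ℝ (fun _ : Fin m => X) X)
    (C : ℝ) (hC : 0 < C) (hT : ∀ y : Fin m → X, ‖T y‖ ≤ C * ∏ i, ‖y i‖)
    (η : X) (a : ℝ) (ha : a = ‖η‖)
    (ha_cr : a < (((m : ℝ) - 1) / m) * (1 / (C * m)) ^ ((1 : ℝ) / ((m : ℝ) - 1)))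
    (rstar : ℝ) (hrstar_nonneg : 0 ≤ rstar)
    (hrstar_root : a + C * rstar ^ m = rstar)
    (hrstar_min : ∀ s : ℝ, 0 ≤ s → a + C * s ^ m = s → rstar ≤ s)
    (rlow : ℝ) (hrlow_nonneg : 0 ≤ rlow)
    (hrlow_root : a - C * rlow ^ m = rlow)
    (hrlow_min : ∀ s : ℝ, 0 ≤ s → a - C * s ^ m = s → rlow ≤ s) :
    ∃ xstar : X,
      (‖xstar‖ ≤ (1 / (C * m)) ^ ((1 : ℝ) / ((m : ℝ) - 1)) ∧
        xstar = η + T (fun _ => xstar) ∧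
        rlow ≤ ‖xstar‖ ∧ ‖xstar‖ ≤ rstar) ∧
      ∀ y : X, ‖y‖ ≤ (1 / (C * m)) ^ ((1 : ℝ) / ((m : ℝ) - 1)) →
        y = η + T (fun _ => y) → y = xstar :=
  lemarie_rieusset_equation_general m hm T C hC hT η a ha ha_cr rstar hrstar_nonneg hrstar_root
    hrstar_min rlow hrlow_root
end

section
/- Let a < b be reals, let p, q be real exponents with 1 ≤ q < p < ∞, let ξ, η ≥ 0 and let h : ℝ → ℝ satisfy |h(u₁) − h(u₂)| ≤ (ξ + η ρ^{(p−q)/q}) |u₁ − u₂| whenever |u₁|, |u₂| ≤ ρ, for every ρ > 0. Then for every r > 0 and every x₁, x₂ ∈ L^p([a,b]) with ‖x₁‖_{L^p} ≤ r and ‖x₂‖_{L^p} ≤ r, the compositions h∘x₁ and h∘x₂ differ by an L^q function and ‖h∘x₁ − h∘x₂‖_{L^q} ≤ (ξ (b−a)^{(p−q)/(pq)} + η r^{(p−q)/q}) ‖x₁ − x₂‖_{L^p}. -/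
/-!
Pointwise, `|h x₁ - h x₂| ≤ (ξ + η max(|x₁|, |x₂|) ^ α) |x₁ - x₂|` with `α = (p - q) / q`, and
Hölder's inequality for `1/q = α/p + 1/p` together with the embedding `L^p ⊆ L^q` on `[a, b]`
turn this into an `L^q` bound. Used directly, it only gives the constant
`‖max(|x₁|, |x₂|)‖_p ^ α`, which can exceed `r ^ α`. Instead we walk from `x₂` to `x₁` in `n`
equal steps `e = (x₁ - x₂) / n`: every intermediate point stays in the (convex) ball of radius
`r`, so the step from `y` to `y + e` costs at most
`(ξ (b - a)^{1/q - 1/p} + η (r + ‖e‖_p) ^ α) ‖e‖_p`, where `r + ‖e‖_p` bounds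
`‖ |y| + |e| ‖_p`. Summing the `n` steps and letting `n → ∞` gives the theorem.
-/

open MeasureTheory Filter ENNReal Topology

section

variable {X E : Type*} [MeasurableSpace X] {μ : Measure X}

theorem eLpNorm_add_smul_sub_le [NormedAddCommGroup E] [NormedSpace ℝ E] {p : ℝ≥0∞}
    (hp : 1 ≤ p) {f g : X → E} (hf : AEStronglyMeasurable f μ) (hg : AEStronglyMeasurable g μ)
    {R : ℝ≥0∞} (hfR : eLpNorm f p μ ≤ R) (hgR : eLpNorm g p μ ≤ R) {θ : ℝ} (hθ₀ : 0 ≤ θ)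
    (hθ₁ : θ ≤ 1) :
    eLpNorm (fun x => g x + θ • (f x - g x)) p μ ≤ R := by
  have hconv : (fun x => g x + θ • (f x - g x)) = (1 - θ) • g + θ • f := by
    ext x
    simp only [Pi.add_apply, Pi.smul_apply, Pi.sub_apply, smul_sub, sub_smul, one_smul]
    abel
  calc eLpNorm (fun x => g x + θ • (f x - g x)) p μ
      ≤ eLpNorm ((1 - θ) • g) p μ + eLpNorm (θ • f) p μ := by
        rw [hconv]
        exact eLpNorm_add_le (hg.const_smul _) (hf.const_smul _) hp
    _ ≤ ‖1 - θ‖ₑ * R + ‖θ‖ₑ * R := by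
        rw [eLpNorm_const_smul, eLpNorm_const_smul]
        gcongr
    _ = R := by
        rw [Real.enorm_of_nonneg (by linarith), Real.enorm_of_nonneg hθ₀, ← add_mul,
          ← ENNReal.ofReal_add (by linarith) hθ₀, sub_add_cancel, ENNReal.ofReal_one, one_mul]

theorem eLpNorm_norm_rpow_mul_le [NormedAddCommGroup E] {p q : ℝ} (hq : 0 < q) (hqp : q < p)
    {g : X → E} {f : X → ℝ} (hg : AEStronglyMeasurable g μ) (hf : AEStronglyMeasurable f μ) :
    eLpNorm (fun x => ‖g x‖ ^ ((p - q) / q) * f x) (.ofReal q) μ ≤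
      eLpNorm g (.ofReal p) μ ^ ((p - q) / q) * eLpNorm f (.ofReal p) μ := by
  have hpq : 0 < p - q := by linarith
  have hp : 0 < p := hq.trans hqp
  -- `‖g‖ ^ ((p - q) / q)` lies in `L^r` with `r = p q / (p - q)`, and `1/r + 1/p = 1/q`
  have : HolderTriple (.ofReal (p * q / (p - q))) (.ofReal p) (.ofReal q) := by
    constructor
    rw [← ENNReal.ofReal_inv_of_pos (by positivity), ← ENNReal.ofReal_inv_of_pos hp,
      ← ENNReal.ofReal_inv_of_pos hq, ← ENNReal.ofReal_add (by positivity) (by positivity)]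
    congr 1
    field_simp
    ring
  have hexp : ENNReal.ofReal (p * q / (p - q)) * .ofReal ((p - q) / q) = .ofReal p := by
    rw [← ENNReal.ofReal_mul (by positivity)]
    congr 1
    field_simp
  have holder := eLpNorm_smul_le_mul_eLpNorm (p := .ofReal (p * q / (p - q))) (q := .ofReal p)
    (r := .ofReal q) hf
    ((Real.continuous_rpow_const (div_pos hpq hq).le).comp_aestronglyMeasurable hg.norm)
  rwa [eLpNorm_norm_rpow g (div_pos hpq hq), hexp] at holder

end

def LipschitzOnBallsWith (K : ℝ → ℝ) (h : ℝ → ℝ) : Prop :=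
  ∀ ρ : ℝ, 0 < ρ → ∀ u₁ u₂ : ℝ, |u₁| ≤ ρ → |u₂| ≤ ρ → |h u₁ - h u₂| ≤ K ρ * |u₁ - u₂|

namespace LipschitzOnBallsWith

variable {K h : ℝ → ℝ}

theorem abs_sub_le (hh : LipschitzOnBallsWith K h) (u v : ℝ) :
    |h u - h v| ≤ K (max |u| |v|) * |u - v| := by
  rcases (le_max_of_le_left (abs_nonneg u) : 0 ≤ max |u| |v|).eq_or_lt with hρ | hρ
  · have hu : u = 0 := abs_eq_zero.mp (by linarith [le_max_left |u| |v|, abs_nonneg u])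
    have hv : v = 0 := abs_eq_zero.mp (by linarith [le_max_right |u| |v|, abs_nonneg v])
    simp [hu, hv]
  · exact hh _ hρ u v (le_max_left _ _) (le_max_right _ _)

theorem locallyLipschitz (hh : LipschitzOnBallsWith K h) : LocallyLipschitz h := by
  intro u
  refine ⟨_, {v | |v| < |u| + 1}, (isOpen_lt continuous_abs continuous_const).mem_nhds
    (by simp), LipschitzOnWith.of_dist_le' (K := K (|u| + 1)) fun v hv w hw => ?_⟩
  simpa only [Real.dist_eq] using
    hh _ (by positivity) v w (le_of_lt hv) (le_of_lt hw)

theorem continuous (hh : LipschitzOnBallsWith K h) : Continuous h :=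
  hh.locallyLipschitz.continuous

variable {X : Type*} [MeasurableSpace X] {μ : Measure X} {ξ η p q : ℝ}

theorem eLpNorm_comp_add_sub_comp_le
    (hh : LipschitzOnBallsWith (fun ρ => ξ + η * ρ ^ ((p - q) / q)) h) (hq : 1 ≤ q) (hqp : q < p)
    {y e : X → ℝ} (hy : AEStronglyMeasurable y μ) (he : AEStronglyMeasurable e μ) :
    eLpNorm (fun x => h (y x + e x) - h (y x)) (.ofReal q) μ ≤
      (‖ξ‖ₑ * μ Set.univ ^ (1 / q - 1 / p) +
        ‖η‖ₑ * (eLpNorm y (.ofReal p) μ + eLpNorm e (.ofReal p) μ) ^ ((p - q) / q)) *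
        eLpNorm e (.ofReal p) μ := by
  set α := (p - q) / q
  have hα : 0 < α := div_pos (by linarith) (by linarith)
  set g : X → ℝ := fun x => ‖y x‖ + ‖e x‖
  have hg : AEStronglyMeasurable g μ := hy.norm.add he.norm
  have hq₁ : 1 ≤ ENNReal.ofReal q := ENNReal.one_le_ofReal.mpr hq
  have hp₁ : 1 ≤ ENNReal.ofReal p := ENNReal.one_le_ofReal.mpr (by linarith)
  have hpointwise : ∀ x, ‖h (y x + e x) - h (y x)‖ ≤ ‖ξ * e x‖ + ‖η * (‖g x‖ ^ α * e x)‖ := by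
    intro x
    have hmax : max |y x + e x| |y x| ≤ ‖g x‖ := by
      rw [Real.norm_of_nonneg (by positivity)]
      exact max_le (abs_add_le _ _) (le_add_of_nonneg_right (abs_nonneg _))
    have hpow : max |y x + e x| |y x| ^ α ≤ ‖g x‖ ^ α :=
      Real.rpow_le_rpow (le_max_of_le_right (abs_nonneg _)) hmax hα.le
    have hlip := hh.abs_sub_le (y x + e x) (y x)
    rw [add_sub_cancel_left] at hlip
    calc ‖h (y x + e x) - h (y x)‖ ≤ (ξ + η * max |y x + e x| |y x| ^ α) * ‖e x‖ := hlip
      _ ≤ (‖ξ‖ + ‖η‖ * ‖g x‖ ^ α) * ‖e x‖ := by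
        gcongr
        · exact Real.le_norm_self ξ
        · exact Real.le_norm_self η
      _ = ‖ξ * e x‖ + ‖η * (‖g x‖ ^ α * e x)‖ := by
        rw [norm_mul, norm_mul, norm_mul, Real.norm_of_nonneg (by positivity : 0 ≤ ‖g x‖ ^ α)]
        ring
  have hg_le : eLpNorm g (.ofReal p) μ ≤ eLpNorm y (.ofReal p) μ + eLpNorm e (.ofReal p) μ :=
    (eLpNorm_add_le hy.norm he.norm hp₁).trans_eq (by rw [eLpNorm_norm, eLpNorm_norm])
  calc eLpNorm (fun x => h (y x + e x) - h (y x)) (.ofReal q) μ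
      ≤ eLpNorm (fun x => ‖ξ * e x‖ + ‖η * (‖g x‖ ^ α * e x)‖) (.ofReal q) μ :=
        eLpNorm_mono_real hpointwise
    _ ≤ eLpNorm (ξ • e) (.ofReal q) μ + eLpNorm (η • fun x => ‖g x‖ ^ α * e x) (.ofReal q) μ := by
        refine (eLpNorm_add_le (he.const_mul ξ).norm ?_ hq₁).trans_eq ?_
        · exact ((((Real.continuous_rpow_const hα.le).comp_aestronglyMeasurable
            hg.norm).mul he).const_mul η).norm
        · rw [eLpNorm_norm, eLpNorm_norm]; rfl
    _ ≤ ‖ξ‖ₑ * (eLpNorm e (.ofReal p) μ * μ Set.univ ^ (1 / q - 1 / p)) +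
          ‖η‖ₑ * (eLpNorm g (.ofReal p) μ ^ α * eLpNorm e (.ofReal p) μ) := by
        rw [eLpNorm_const_smul, eLpNorm_const_smul]
        gcongr
        · simpa only [ENNReal.toReal_ofReal (by linarith : 0 ≤ q),
            ENNReal.toReal_ofReal (by linarith : 0 ≤ p)] using
            eLpNorm_le_eLpNorm_mul_rpow_measure_univ (ENNReal.ofReal_le_ofReal hqp.le) he
        · exact eLpNorm_norm_rpow_mul_le (by linarith) hqp hg he
    _ ≤ ‖ξ‖ₑ * (eLpNorm e (.ofReal p) μ * μ Set.univ ^ (1 / q - 1 / p)) +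
          ‖η‖ₑ * ((eLpNorm y (.ofReal p) μ + eLpNorm e (.ofReal p) μ) ^ α *
            eLpNorm e (.ofReal p) μ) := by
        gcongr
    _ = _ := by ring

theorem eLpNorm_comp_sub_comp_le_of_ne_zero
    (hh : LipschitzOnBallsWith (fun ρ => ξ + η * ρ ^ ((p - q) / q)) h) (hq : 1 ≤ q) (hqp : q < p)
    {x₁ x₂ : X → ℝ} (hx₁ : AEStronglyMeasurable x₁ μ) (hx₂ : AEStronglyMeasurable x₂ μ)
    {R : ℝ≥0∞} (hR₁ : eLpNorm x₁ (.ofReal p) μ ≤ R) (hR₂ : eLpNorm x₂ (.ofReal p) μ ≤ R)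
    {n : ℕ} (hn : n ≠ 0) :
    eLpNorm (fun x => h (x₁ x) - h (x₂ x)) (.ofReal q) μ ≤
      (‖ξ‖ₑ * μ Set.univ ^ (1 / q - 1 / p) + ‖η‖ₑ *
        (R + eLpNorm (fun x => x₁ x - x₂ x) (.ofReal p) μ / n) ^ ((p - q) / q)) *
        eLpNorm (fun x => x₁ x - x₂ x) (.ofReal p) μ := by
  set D := eLpNorm (fun x => x₁ x - x₂ x) (.ofReal p) μ
  set L := ‖ξ‖ₑ * μ Set.univ ^ (1 / q - 1 / p) + ‖η‖ₑ * (R + D / n) ^ ((p - q) / q)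
  have hn' : (0 : ℝ) < n := by positivity
  set y : ℕ → X → ℝ := fun i x => x₂ x + ((i : ℝ) / n) • (x₁ x - x₂ x)
  set e : X → ℝ := (n : ℝ)⁻¹ • fun x => x₁ x - x₂ x
  have hd : AEStronglyMeasurable (fun x => x₁ x - x₂ x) μ := hx₁.sub hx₂
  have hy : ∀ i, AEStronglyMeasurable (y i) μ := fun i => hx₂.add (hd.const_smul ((i : ℝ) / n))
  have hy_succ : ∀ i x, y (i + 1) x = y i x + e x := by
    intro i x
    simp only [y, e, Pi.smul_apply, smul_eq_mul]
    push_cast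
    ring
  have hyR : ∀ i < n, eLpNorm (y i) (.ofReal p) μ ≤ R := fun i hi =>
    eLpNorm_add_smul_sub_le (ENNReal.one_le_ofReal.mpr (by linarith)) hx₁ hx₂ hR₁ hR₂
      (by positivity) (div_le_one_of_le₀ (by exact_mod_cast hi.le) hn'.le)
  have he : eLpNorm e (.ofReal p) μ = D / n := by
    rw [eLpNorm_const_smul, ENNReal.div_eq_inv_mul, Real.enorm_of_nonneg (by positivity),
      ENNReal.ofReal_inv_of_pos hn', ENNReal.ofReal_natCast]
  have htelescope : (fun x => h (x₁ x) - h (x₂ x)) =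
      ∑ i ∈ Finset.range n, fun x => h (y i x + e x) - h (y i x) := by
    ext x
    simp only [Finset.sum_apply, ← hy_succ]
    rw [Finset.sum_range_sub (fun i => h (y i x))]
    simp [y, hn'.ne']
  calc eLpNorm (fun x => h (x₁ x) - h (x₂ x)) (.ofReal q) μ
      ≤ ∑ i ∈ Finset.range n, eLpNorm (fun x => h (y i x + e x) - h (y i x)) (.ofReal q) μ := by
        rw [htelescope]
        refine eLpNorm_sum_le (fun i _ => ?_) (ENNReal.one_le_ofReal.mpr hq)
        exact (hh.continuous.comp_aestronglyMeasurable ((hy i).add (hd.const_smul _))).sub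
          (hh.continuous.comp_aestronglyMeasurable (hy i))
    _ ≤ ∑ _i ∈ Finset.range n, L * (D / n) := by
        refine Finset.sum_le_sum fun i hi => ?_
        grw [hh.eLpNorm_comp_add_sub_comp_le hq hqp (hy i) (hd.const_smul _),
          hyR i (Finset.mem_range.mp hi), he]
        exact div_nonneg (by linarith) (by linarith)
    _ = L * D := by
        rw [Finset.sum_const, Finset.card_range, nsmul_eq_mul, mul_left_comm,
          ENNReal.mul_div_cancel (by exact_mod_cast hn) (ENNReal.natCast_ne_top n)]

theorem eLpNorm_comp_sub_comp_le
    (hh : LipschitzOnBallsWith (fun ρ => ξ + η * ρ ^ ((p - q) / q)) h) (hq : 1 ≤ q) (hqp : q < p)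
    {x₁ x₂ : X → ℝ} (hx₁ : MemLp x₁ (.ofReal p) μ) (hx₂ : MemLp x₂ (.ofReal p) μ)
    {R : ℝ≥0∞} (hR₁ : eLpNorm x₁ (.ofReal p) μ ≤ R) (hR₂ : eLpNorm x₂ (.ofReal p) μ ≤ R) :
    eLpNorm (fun x => h (x₁ x) - h (x₂ x)) (.ofReal q) μ ≤
      (‖ξ‖ₑ * μ Set.univ ^ (1 / q - 1 / p) + ‖η‖ₑ * R ^ ((p - q) / q)) *
        eLpNorm (fun x => x₁ x - x₂ x) (.ofReal p) μ := by
  set D := eLpNorm (fun x => x₁ x - x₂ x) (.ofReal p) μ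
  have hD : D ≠ ∞ := (hx₁.sub hx₂).eLpNorm_ne_top
  have hD_div : Tendsto (fun n : ℕ => D / n) atTop (𝓝 0) := by
    simpa only [div_eq_mul_inv, mul_zero] using
      ENNReal.Tendsto.const_mul ENNReal.tendsto_inv_nat_nhds_zero (Or.inr hD)
  have hlim : Tendsto (fun n : ℕ => (‖ξ‖ₑ * μ Set.univ ^ (1 / q - 1 / p) +
      ‖η‖ₑ * (R + D / n) ^ ((p - q) / q)) * D) atTop
      (𝓝 ((‖ξ‖ₑ * μ Set.univ ^ (1 / q - 1 / p) + ‖η‖ₑ * R ^ ((p - q) / q)) * D)) := by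
    refine ENNReal.Tendsto.mul_const (tendsto_const_nhds.add ?_) (Or.inr hD)
    refine ENNReal.Tendsto.const_mul ?_ (Or.inr enorm_ne_top)
    simpa only [add_zero] using (tendsto_const_nhds.add hD_div).ennrpow_const ((p - q) / q)
  exact ge_of_tendsto hlim (eventually_ne_atTop 0 |>.mono fun n hn =>
    hh.eLpNorm_comp_sub_comp_le_of_ne_zero hq hqp hx₁.1 hx₂.1 hR₁ hR₂ hn)

end LipschitzOnBallsWith

/-- Variable Lipschitz estimate for the superposition operator `H x = h ∘ x`
from `L^p[a,b]` to `L^q[a,b]` on balls: if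
`|h(u₁) - h(u₂)| ≤ (ξ + η ρ^{(p-q)/q}) |u₁ - u₂|` for `|u₁|,|u₂| ≤ ρ`, then
`‖h∘x₁ - h∘x₂‖_{L^q} ≤ (ξ (b-a)^{(p-q)/(pq)} + η r^{(p-q)/q}) ‖x₁ - x₂‖_{L^p}`
whenever `‖x₁‖_{L^p}, ‖x₂‖_{L^p} ≤ r`. -/
theorem superposition_operator_variable_lipschitz
    (a b : ℝ) (hab : a < b) (p q : ℝ) (hq : 1 ≤ q) (hqp : q < p)
    (ξ η : ℝ) (hξ : 0 ≤ ξ) (hη : 0 ≤ η) (h : ℝ → ℝ)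
    (hh : ∀ ρ : ℝ, 0 < ρ → ∀ u₁ u₂ : ℝ, |u₁| ≤ ρ → |u₂| ≤ ρ →
      |h u₁ - h u₂| ≤ (ξ + η * ρ ^ ((p - q) / q)) * |u₁ - u₂|) :
    ∀ r : ℝ, 0 < r → ∀ x₁ x₂ : ℝ → ℝ,
      MemLp x₁ (ENNReal.ofReal p) (volume.restrict (Set.Icc a b)) →
      MemLp x₂ (ENNReal.ofReal p) (volume.restrict (Set.Icc a b)) →
      eLpNorm x₁ (ENNReal.ofReal p) (volume.restrict (Set.Icc a b)) ≤ ENNReal.ofReal r →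
      eLpNorm x₂ (ENNReal.ofReal p) (volume.restrict (Set.Icc a b)) ≤ ENNReal.ofReal r →
      MemLp (fun t => h (x₁ t) - h (x₂ t)) (ENNReal.ofReal q)
          (volume.restrict (Set.Icc a b)) ∧
        eLpNorm (fun t => h (x₁ t) - h (x₂ t)) (ENNReal.ofReal q)
            (volume.restrict (Set.Icc a b)) ≤
          ENNReal.ofReal (ξ * (b - a) ^ ((p - q) / (p * q)) + η * r ^ ((p - q) / q)) *
            eLpNorm (fun t => x₁ t - x₂ t) (ENNReal.ofReal p)
              (volume.restrict (Set.Icc a b)) := by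
  intro r hr x₁ x₂ hx₁ hx₂ hr₁ hr₂
  have hexp : 1 / q - 1 / p = (p - q) / (p * q) := by
    field_simp [(by linarith : q ≠ 0), (by linarith : p ≠ 0)]
  have hconst : ‖ξ‖ₑ * (volume.restrict (Set.Icc a b)) Set.univ ^ (1 / q - 1 / p) +
      ‖η‖ₑ * ENNReal.ofReal r ^ ((p - q) / q) =
      ENNReal.ofReal (ξ * (b - a) ^ ((p - q) / (p * q)) + η * r ^ ((p - q) / q)) := by
    rw [Measure.restrict_apply_univ, Real.volume_Icc, Real.enorm_of_nonneg hξ,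
      Real.enorm_of_nonneg hη, hexp, ENNReal.ofReal_rpow_of_pos (by linarith),
      ENNReal.ofReal_rpow_of_pos hr, ← ENNReal.ofReal_mul hξ, ← ENNReal.ofReal_mul hη,
      ← ENNReal.ofReal_add (by positivity) (by positivity)]
  have hbound := LipschitzOnBallsWith.eLpNorm_comp_sub_comp_le hh hq hqp hx₁ hx₂ hr₁ hr₂
  rw [hconst] at hbound
  refine ⟨⟨?_, hbound.trans_lt (ENNReal.mul_lt_top ENNReal.ofReal_lt_top
    (hx₁.sub hx₂).eLpNorm_lt_top)⟩, hbound⟩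
  exact (LipschitzOnBallsWith.continuous hh |>.comp_aestronglyMeasurable hx₁.1).sub
    (LipschitzOnBallsWith.continuous hh |>.comp_aestronglyMeasurable hx₂.1)
end

section
/- Let a < b be reals, let p, q be real exponents with 1 ≤ q < p < ∞, let ξ, η ≥ 0 and let h : ℝ → ℝ satisfy |h(u₁) − h(u₂)| ≤ (ξ + η ρ^{(p−q)/q}) |u₁ − u₂| whenever |u₁|, |u₂| ≤ ρ, for every ρ > 0. Then for every ψ₁, ψ₂ ∈ L^p([a,b]), ‖h∘ψ₁ − h∘ψ₂‖_{L^q} ≤ (ξ (b−a)^{(p−q)/(pq)} + η ‖max(|ψ₁|, |ψ₂|)‖_{L^p}^{(p−q)/q}) ‖ψ₁ − ψ₂‖_{L^p}, where max(|ψ₁|,|ψ₂|) denotes the pointwise maximum. -/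
/-!
Applying the hypothesis on `h` at each `t` with `ρ = max |ψ₁ t| |ψ₂ t|` gives the pointwise
bound `|h ψ₁ - h ψ₂| ≤ ξ |ψ₁ - ψ₂| + η ρ^{(p-q)/q} |ψ₁ - ψ₂|`. The first term is handled by the
inclusion `L^p ⊆ L^q` on an interval of length `b - a`, the second by Hölder's inequality with
exponents `1/q = (p-q)/(pq) + 1/p`, since `‖ρ^{(p-q)/q}‖_{pq/(p-q)} = ‖ρ‖_p^{(p-q)/q}`.
-/

open MeasureTheory ENNReal

lemma abs_sub_le_of_forall_abs_le {h L : ℝ → ℝ}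
    (hh : ∀ ρ : ℝ, 0 < ρ → ∀ u₁ u₂ : ℝ, |u₁| ≤ ρ → |u₂| ≤ ρ →
      |h u₁ - h u₂| ≤ L ρ * |u₁ - u₂|)
    (u₁ u₂ : ℝ) : |h u₁ - h u₂| ≤ L (max |u₁| |u₂|) * |u₁ - u₂| := by
  rcases (le_max_of_le_left (abs_nonneg u₁) : 0 ≤ max |u₁| |u₂|).lt_or_eq with hpos | hzero
  · exact hh _ hpos u₁ u₂ (le_max_left _ _) (le_max_right _ _)
  · obtain ⟨h₁, h₂⟩ := max_le_iff.mp hzero.ge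
    simp [abs_nonpos_iff.mp h₁, abs_nonpos_iff.mp h₂]

lemma eLpNorm_restrict_Icc_le_rpow_mul_eLpNorm {E : Type*} [NormedAddCommGroup E]
    {a b p q : ℝ} (hab : a ≤ b) (hq : 0 < q) (hqp : q ≤ p) {f : ℝ → E}
    (hf : AEStronglyMeasurable f (volume.restrict (Set.Icc a b))) :
    eLpNorm f (ENNReal.ofReal q) (volume.restrict (Set.Icc a b)) ≤
      ENNReal.ofReal ((b - a) ^ ((p - q) / (p * q))) *
        eLpNorm f (ENNReal.ofReal p) (volume.restrict (Set.Icc a b)) := by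
  have hp : 0 < p := hq.trans_le hqp
  have hexp :
      1 / (ENNReal.ofReal q).toReal - 1 / (ENNReal.ofReal p).toReal = (p - q) / (p * q) := by
    rw [toReal_ofReal hq.le, toReal_ofReal hp.le]
    field_simp
  have := eLpNorm_le_eLpNorm_mul_rpow_measure_univ (ENNReal.ofReal_le_ofReal hqp) hf
  rwa [hexp, Measure.restrict_apply_univ, Real.volume_Icc,
    ofReal_rpow_of_nonneg (sub_nonneg.mpr hab) (div_nonneg (sub_nonneg.mpr hqp) (by positivity)),
    mul_comm] at this

lemma holderTriple_ofReal {p q : ℝ} (hq : 0 < q) (hqp : q < p) :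
    HolderTriple (ENNReal.ofReal (p * q / (p - q))) (ENNReal.ofReal p) (ENNReal.ofReal q) := by
  have hp : 0 < p := hq.trans hqp
  have hpq : 0 < p - q := sub_pos.mpr hqp
  constructor
  rw [← ofReal_inv_of_pos (by positivity), ← ofReal_inv_of_pos hp,
    ← ofReal_add (by positivity) (by positivity), ← ofReal_inv_of_pos hq]
  congr 1
  field_simp
  ring

lemma eLpNorm_norm_rpow_smul_le {X E F : Type*} [MeasurableSpace X] {μ : Measure X}
    [NormedAddCommGroup E] [NormedSpace ℝ E] [NormedAddCommGroup F] {p q : ℝ} (hq : 0 < q)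
    (hqp : q < p) {g : X → F} {f : X → E} (hg : AEStronglyMeasurable g μ)
    (hf : AEStronglyMeasurable f μ) :
    eLpNorm (fun t => ‖g t‖ ^ ((p - q) / q) • f t) (ENNReal.ofReal q) μ ≤
      eLpNorm g (ENNReal.ofReal p) μ ^ ((p - q) / q) * eLpNorm f (ENNReal.ofReal p) μ := by
  have hp : 0 < p := hq.trans hqp
  have hpq : 0 < p - q := sub_pos.mpr hqp
  have hα : 0 < (p - q) / q := div_pos hpq hq
  have hr : ENNReal.ofReal (p * q / (p - q)) * ENNReal.ofReal ((p - q) / q) = ENNReal.ofReal p := by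
    rw [← ofReal_mul (by positivity)]
    congr 1
    field_simp
  have := holderTriple_ofReal hq hqp
  have hgα : AEStronglyMeasurable (fun t => ‖g t‖ ^ ((p - q) / q)) μ :=
    (Real.continuous_rpow_const hα.le).comp_aestronglyMeasurable hg.norm
  calc eLpNorm (fun t => ‖g t‖ ^ ((p - q) / q) • f t) (ENNReal.ofReal q) μ
      ≤ eLpNorm (fun t => ‖g t‖ ^ ((p - q) / q)) (ENNReal.ofReal (p * q / (p - q))) μ *
          eLpNorm f (ENNReal.ofReal p) μ := eLpNorm_smul_le_mul_eLpNorm hf hgα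
    _ = eLpNorm g (ENNReal.ofReal p) μ ^ ((p - q) / q) * eLpNorm f (ENNReal.ofReal p) μ := by
      rw [eLpNorm_norm_rpow g hα, hr]

lemma eLpNorm_restrict_Icc_add_rpow_mul_le {E F : Type*} [NormedAddCommGroup E]
    [NormedAddCommGroup F] {a b p q ξ η : ℝ} (hab : a ≤ b) (hq : 1 ≤ q) (hqp : q < p)
    (hξ : 0 ≤ ξ) (hη : 0 ≤ η) {g : ℝ → F} {f : ℝ → E}
    (hg : AEStronglyMeasurable g (volume.restrict (Set.Icc a b)))
    (hf : AEStronglyMeasurable f (volume.restrict (Set.Icc a b))) :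
    eLpNorm (fun t => (ξ + η * ‖g t‖ ^ ((p - q) / q)) * ‖f t‖) (ENNReal.ofReal q)
        (volume.restrict (Set.Icc a b)) ≤
      (ENNReal.ofReal ξ * ENNReal.ofReal ((b - a) ^ ((p - q) / (p * q))) +
          ENNReal.ofReal η * eLpNorm g (ENNReal.ofReal p) (volume.restrict (Set.Icc a b)) ^
            ((p - q) / q)) *
        eLpNorm f (ENNReal.ofReal p) (volume.restrict (Set.Icc a b)) := by
  have hq₀ : 0 < q := one_pos.trans_le hq
  have hgα : AEStronglyMeasurable (fun t => ‖g t‖ ^ ((p - q) / q))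
      (volume.restrict (Set.Icc a b)) :=
    (Real.continuous_rpow_const (div_pos (sub_pos.mpr hqp) hq₀).le).comp_aestronglyMeasurable
      hg.norm
  have hsplit : (fun t => (ξ + η * ‖g t‖ ^ ((p - q) / q)) * ‖f t‖) =
      ξ • (fun t => ‖f t‖) + η • (fun t => ‖g t‖ ^ ((p - q) / q) • ‖f t‖) := by
    ext t
    simp only [Pi.add_apply, Pi.smul_apply, smul_eq_mul]
    ring
  have hξterm := eLpNorm_restrict_Icc_le_rpow_mul_eLpNorm hab hq₀ hqp.le hf
  have hηterm := eLpNorm_norm_rpow_smul_le hq₀ hqp hg hf.norm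
  rw [eLpNorm_norm] at hηterm
  calc _ ≤ eLpNorm (ξ • (fun t => ‖f t‖)) (ENNReal.ofReal q) (volume.restrict (Set.Icc a b)) +
          eLpNorm (η • (fun t => ‖g t‖ ^ ((p - q) / q) • ‖f t‖)) (ENNReal.ofReal q)
            (volume.restrict (Set.Icc a b)) := by
        rw [hsplit]
        exact eLpNorm_add_le (hf.norm.const_smul ξ) ((hgα.smul hf.norm).const_smul η)
          (ENNReal.one_le_ofReal.mpr hq)
    _ ≤ _ := by
        rw [eLpNorm_const_smul, eLpNorm_const_smul, eLpNorm_norm, Real.enorm_eq_ofReal hξ,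
          Real.enorm_eq_ofReal hη, add_mul, mul_assoc, mul_assoc]
        gcongr

/-- Refined estimate for the superposition operator via the pointwise maximum:
`‖h∘ψ₁ - h∘ψ₂‖_{L^q} ≤ (ξ (b-a)^{(p-q)/(pq)} + η ‖max(|ψ₁|,|ψ₂|)‖_{L^p}^{(p-q)/q}) ‖ψ₁ - ψ₂‖_{L^p}`. -/
theorem superposition_operator_pointwise_max_estimate
    (a b : ℝ) (hab : a < b) (p q : ℝ) (hq : 1 ≤ q) (hqp : q < p)
    (ξ η : ℝ) (hξ : 0 ≤ ξ) (hη : 0 ≤ η) (h : ℝ → ℝ)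
    (hh : ∀ ρ : ℝ, 0 < ρ → ∀ u₁ u₂ : ℝ, |u₁| ≤ ρ → |u₂| ≤ ρ →
      |h u₁ - h u₂| ≤ (ξ + η * ρ ^ ((p - q) / q)) * |u₁ - u₂|) :
    ∀ ψ₁ ψ₂ : ℝ → ℝ,
      MemLp ψ₁ (ENNReal.ofReal p) (volume.restrict (Set.Icc a b)) →
      MemLp ψ₂ (ENNReal.ofReal p) (volume.restrict (Set.Icc a b)) →
      eLpNorm (fun t => h (ψ₁ t) - h (ψ₂ t)) (ENNReal.ofReal q)
          (volume.restrict (Set.Icc a b)) ≤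
        ENNReal.ofReal (ξ * (b - a) ^ ((p - q) / (p * q)) +
            η * ((eLpNorm (fun t => max |ψ₁ t| |ψ₂ t|) (ENNReal.ofReal p)
              (volume.restrict (Set.Icc a b))).toReal) ^ ((p - q) / q)) *
          eLpNorm (fun t => ψ₁ t - ψ₂ t) (ENNReal.ofReal p)
            (volume.restrict (Set.Icc a b)) := by
  intro ψ₁ ψ₂ hψ₁ hψ₂
  have hρ : MemLp (fun t => max |ψ₁ t| |ψ₂ t|) (ENNReal.ofReal p)
      (volume.restrict (Set.Icc a b)) := by
    simpa only [Real.norm_eq_abs, Pi.sup_def] using hψ₁.norm.sup hψ₂.norm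
  have hpointwise : ∀ t, ‖h (ψ₁ t) - h (ψ₂ t)‖ ≤
      (ξ + η * ‖max |ψ₁ t| |ψ₂ t|‖ ^ ((p - q) / q)) * ‖ψ₁ t - ψ₂ t‖ := fun t => by
    simpa only [Real.norm_eq_abs, abs_of_nonneg (le_max_of_le_left (abs_nonneg _) :
      0 ≤ max |ψ₁ t| |ψ₂ t|)] using abs_sub_le_of_forall_abs_le hh (ψ₁ t) (ψ₂ t)
  calc _ ≤ _ := eLpNorm_mono_real hpointwise
    _ ≤ _ := eLpNorm_restrict_Icc_add_rpow_mul_le hab.le hq hqp hξ hη hρ.1 (hψ₁.1.sub hψ₂.1)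
    _ = _ := by
        rw [← ofReal_toReal hρ.2.ne, ofReal_rpow_of_nonneg toReal_nonneg
          (div_pos (sub_pos.mpr hqp) (one_pos.trans_le hq)).le, toReal_ofReal toReal_nonneg,
          ← ofReal_mul hξ, ← ofReal_mul hη, ← ofReal_add (by positivity) (by positivity)]
end
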